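/- arXiv:math/9201235 — 4 statements merged into one kernel-verified Lean document; each statement's English description precedes it below -/
import Mathlib

section
/- Let B be a separable Banach space. Let X and Y be B-valued random variables (on possibly different probability spaces), neither of which is almost surely zero, with E‖X‖² < ∞ and E‖Y‖² < ∞. Let (X_n) be a sequence of independent B-valued random variables each having the same distribution as X, and let (Y_n) be a sequence of independent B-valued random variables each having the same distribution as Y. Suppose there are constants c₁, c₂ > 0 such that for every positive integer N: (i) c₁⁻¹·E[sup_{1≤j≤N}‖X_j‖] ≤ E[sup_{1≤j≤N}‖Y_j‖] ≤ c₁·E[sup_{1≤j≤N}‖X_j‖]; (ii) (E[sup_{1≤j≤N}‖X_j‖])² ≥ c₂·E[(sup_{1≤j≤N}‖X_j‖)²]; and (iii) (E[sup_{1≤j≤N}‖Y_j‖])² ≥ c₂·E[(sup_{1≤j≤N}‖Y_j‖)²]. Then there exists a constant c > 0, depending only on c₁ and c₂, such that for all α > 0: c⁻¹·P[‖X‖ ≥ cα] ≤ P[‖Y‖ ≥ α] ≤ c·P[‖X‖ ≥ c⁻¹α]. -/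
open MeasureTheory ProbabilityTheory
set_option linter.unusedSectionVars false
set_option linter.unusedVariables false

section Helpers

variable {B : Type*} [NormedAddCommGroup B] [MeasurableSpace B] [BorelSpace B]
variable {Ω Ω' : Type*} [MeasurableSpace Ω] [MeasurableSpace Ω']
variable {μ : Measure Ω} {ν : Measure Ω'}
variable {X : Ω → B} {Xs : ℕ → Ω' → B}

lemma sup_meas (hXs : ∀ n, Measurable (Xs n)) (N : ℕ) :
    Measurable (fun ω => ⨆ j : Fin N, ‖Xs j.val ω‖) :=
  Measurable.iSup (fun j => (hXs j.val).norm)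

lemma sup_nonneg' (N : ℕ) (ω : Ω') : 0 ≤ ⨆ j : Fin N, ‖Xs j.val ω‖ :=
  Real.iSup_nonneg (fun j => norm_nonneg _)

lemma norm_int [IsFiniteMeasure μ] (hX : Measurable X)
    (h2 : Integrable (fun ω => ‖X ω‖ ^ 2) μ) : Integrable (fun ω => ‖X ω‖) μ := by
  refine ((integrable_const (1:ℝ)).add h2).mono' hX.norm.aestronglyMeasurable ?_
  refine Filter.Eventually.of_forall fun ω => ?_
  have h := norm_nonneg (X ω)
  rw [Real.norm_of_nonneg h]
  simp only [Pi.add_apply]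
  nlinarith

lemma transfer_int {g : B → ℝ} (hg : Measurable g) (hX : Measurable X) {n : ℕ}
    (hXs : ∀ n, Measurable (Xs n)) (hd : Measure.map (Xs n) ν = Measure.map X μ)
    (h : Integrable (fun ω => g (X ω)) μ) : Integrable (fun ω => g (Xs n ω)) ν := by
  have h1 : Integrable g (Measure.map X μ) := by
    rw [integrable_map_measure hg.aestronglyMeasurable hX.aemeasurable]
    exact h
  rw [← hd] at h1
  rw [integrable_map_measure hg.aestronglyMeasurable (hXs n).aemeasurable] at h1
  exact h1

lemma transfer_integral {g : B → ℝ} (hg : Measurable g) (hX : Measurable X) {n : ℕ}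
    (hXs : ∀ n, Measurable (Xs n)) (hd : Measure.map (Xs n) ν = Measure.map X μ) :
    ∫ ω, g (Xs n ω) ∂ν = ∫ ω, g (X ω) ∂μ := by
  rw [← integral_map (hXs n).aemeasurable hg.aestronglyMeasurable, hd,
    integral_map hX.aemeasurable hg.aestronglyMeasurable]

lemma transfer_tail (hX : Measurable X) {n : ℕ}
    (hXs : ∀ n, Measurable (Xs n)) (hd : Measure.map (Xs n) ν = Measure.map X μ) (t : ℝ) :
    ν {ω | t ≤ ‖Xs n ω‖} = μ {ω | t ≤ ‖X ω‖} := by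
  have hs : MeasurableSet {b : B | t ≤ ‖b‖} := measurable_norm measurableSet_Ici
  have h1 : ν ((Xs n) ⁻¹' {b : B | t ≤ ‖b‖}) = Measure.map (Xs n) ν {b : B | t ≤ ‖b‖} := by
    rw [Measure.map_apply (hXs n) hs]
  have h2 : μ (X ⁻¹' {b : B | t ≤ ‖b‖}) = Measure.map X μ {b : B | t ≤ ‖b‖} := by
    rw [Measure.map_apply hX hs]
  have : ν ((Xs n) ⁻¹' {b : B | t ≤ ‖b‖}) = μ (X ⁻¹' {b : B | t ≤ ‖b‖}) := by
    rw [h1, h2, hd]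
  exact this


lemma sup_int [IsProbabilityMeasure μ] [IsProbabilityMeasure ν]
    (hX : Measurable X) (hXs : ∀ n, Measurable (Xs n))
    (hd : ∀ n, Measure.map (Xs n) ν = Measure.map X μ)
    (h2 : Integrable (fun ω => ‖X ω‖ ^ 2) μ) (N : ℕ) :
    Integrable (fun ω => ⨆ j : Fin N, ‖Xs j.val ω‖) ν := by
  have hint : ∀ j : Fin N, Integrable (fun ω => ‖Xs j.val ω‖) ν := fun j =>
    transfer_int measurable_norm hX hXs (hd j.val) (norm_int hX h2)
  refine (integrable_finset_sum Finset.univ (fun j _ => hint j)).mono'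
    ((sup_meas hXs N).aestronglyMeasurable) (Filter.Eventually.of_forall fun ω => ?_)
  rw [Real.norm_of_nonneg (sup_nonneg' N ω)]
  rcases Nat.eq_zero_or_pos N with h0 | hpos
  · subst h0
    simp [Real.iSup_of_isEmpty]
  · haveI : Nonempty (Fin N) := ⟨⟨0, hpos⟩⟩
    exact ciSup_le fun j => Finset.single_le_sum (f := fun i : Fin N => ‖Xs i.val ω‖) (fun i _ => norm_nonneg _) (Finset.mem_univ j)

lemma sup_sq_le (N : ℕ) (ω : Ω') :
    (⨆ j : Fin N, ‖Xs j.val ω‖) ^ 2 ≤ ∑ j : Fin N, ‖Xs j.val ω‖ ^ 2 := by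
  rcases Nat.eq_zero_or_pos N with h0 | hpos
  · subst h0
    simp [Real.iSup_of_isEmpty]
  · haveI : Nonempty (Fin N) := ⟨⟨0, hpos⟩⟩
    have hsum : 0 ≤ ∑ j : Fin N, ‖Xs j.val ω‖ ^ 2 := Finset.sum_nonneg fun i _ => sq_nonneg _
    have h1 : (⨆ j : Fin N, ‖Xs j.val ω‖) ≤ Real.sqrt (∑ j : Fin N, ‖Xs j.val ω‖ ^ 2) := by
      refine ciSup_le fun j => ?_
      have hj : ‖Xs j.val ω‖ ^ 2 ≤ ∑ i : Fin N, ‖Xs i.val ω‖ ^ 2 :=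
        Finset.single_le_sum (f := fun i : Fin N => ‖Xs i.val ω‖ ^ 2) (fun i _ => sq_nonneg _) (Finset.mem_univ j)
      exact Real.le_sqrt_of_sq_le hj
    calc (⨆ j : Fin N, ‖Xs j.val ω‖) ^ 2 ≤ Real.sqrt (∑ j : Fin N, ‖Xs j.val ω‖ ^ 2) ^ 2 :=
          pow_le_pow_left₀ (sup_nonneg' N ω) h1 2
      _ = _ := Real.sq_sqrt hsum

lemma sup_sq_int [IsProbabilityMeasure μ] [IsProbabilityMeasure ν]
    (hX : Measurable X) (hXs : ∀ n, Measurable (Xs n))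
    (hd : ∀ n, Measure.map (Xs n) ν = Measure.map X μ)
    (h2 : Integrable (fun ω => ‖X ω‖ ^ 2) μ) (N : ℕ) :
    Integrable (fun ω => (⨆ j : Fin N, ‖Xs j.val ω‖) ^ 2) ν := by
  have hint : ∀ j : Fin N, Integrable (fun ω => ‖Xs j.val ω‖ ^ 2) ν := fun j =>
    transfer_int (measurable_norm.pow_const 2) hX hXs (hd j.val) h2
  refine (integrable_finset_sum Finset.univ (fun j _ => hint j)).mono'
    (((sup_meas hXs N).pow_const 2).aestronglyMeasurable) (Filter.Eventually.of_forall fun ω => ?_)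
  rw [Real.norm_of_nonneg (sq_nonneg _)]
  exact sup_sq_le N ω


lemma toReal_compl' [IsProbabilityMeasure μ] {s : Set Ω} (hs : MeasurableSet s) :
    (μ sᶜ).toReal = 1 - (μ s).toReal := by
  rw [prob_compl_eq_one_sub hs,
    ENNReal.toReal_sub_of_le prob_le_one ENNReal.one_ne_top, ENNReal.toReal_one]

lemma tail_prod [IsProbabilityMeasure μ] [IsProbabilityMeasure ν]
    (hX : Measurable X) (hXs : ∀ n, Measurable (Xs n))
    (hind : iIndepFun Xs ν)
    (hd : ∀ n, Measure.map (Xs n) ν = Measure.map X μ)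
    {N : ℕ} (hN : 0 < N) (t : ℝ) :
    (ν {ω | t ≤ ⨆ j : Fin N, ‖Xs j.val ω‖}).toReal
      = 1 - (1 - (μ {ω | t ≤ ‖X ω‖}).toReal) ^ N := by
  haveI : Nonempty (Fin N) := ⟨⟨0, hN⟩⟩
  have hs : MeasurableSet {b : B | ‖b‖ < t} := measurable_norm measurableSet_Iio
  have hbdd : ∀ ω, BddAbove (Set.range fun j : Fin N => ‖Xs j.val ω‖) :=
    fun ω => (Set.finite_range _).bddAbove
  have hA : {ω | (⨆ j : Fin N, ‖Xs j.val ω‖) < t}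
      = ⋂ i ∈ Finset.range N, Xs i ⁻¹' {b : B | ‖b‖ < t} := by
    ext ω
    simp only [Set.mem_setOf_eq, Set.mem_iInter, Set.mem_preimage, Finset.mem_range]
    constructor
    · intro h i hi
      exact lt_of_le_of_lt (le_ciSup (hbdd ω) ⟨i, hi⟩) h
    · intro h
      obtain ⟨j, hj⟩ := exists_eq_ciSup_of_finite (f := fun j : Fin N => ‖Xs j.val ω‖)
      rw [← hj]
      exact h j.val j.isLt
  have hfac : ∀ i : ℕ, ν (Xs i ⁻¹' {b : B | ‖b‖ < t}) = μ {ω | ‖X ω‖ < t} := by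
    intro i
    have h1 : ν (Xs i ⁻¹' {b : B | ‖b‖ < t}) = Measure.map (Xs i) ν {b : B | ‖b‖ < t} :=
      (Measure.map_apply (hXs i) hs).symm
    have h2 : μ (X ⁻¹' {b : B | ‖b‖ < t}) = Measure.map X μ {b : B | ‖b‖ < t} :=
      (Measure.map_apply hX hs).symm
    rw [h1, hd i, ← h2]
    rfl
  have hprod : ν {ω | (⨆ j : Fin N, ‖Xs j.val ω‖) < t} = (μ {ω | ‖X ω‖ < t}) ^ N := by
    rw [hA, hind.measure_inter_preimage_eq_mul (Finset.range N)
      (sets := fun _ => {b : B | ‖b‖ < t}) (fun i _ => hs)]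
    rw [Finset.prod_congr rfl fun i _ => hfac i, Finset.prod_const, Finset.card_range]
  have hcompl : {ω | t ≤ ⨆ j : Fin N, ‖Xs j.val ω‖}
      = {ω | (⨆ j : Fin N, ‖Xs j.val ω‖) < t}ᶜ := by
    ext ω; simp [not_lt]
  have hXcompl : {ω | ‖X ω‖ < t} = {ω | t ≤ ‖X ω‖}ᶜ := by
    ext ω; simp [not_le]
  have hmeasA : MeasurableSet {ω | (⨆ j : Fin N, ‖Xs j.val ω‖) < t} :=
    measurableSet_lt (sup_meas hXs N) measurable_const
  have hmeasX : MeasurableSet {ω | t ≤ ‖X ω‖} := measurableSet_le measurable_const hX.norm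
  rw [hcompl, toReal_compl' hmeasA, hprod, ENNReal.toReal_pow, hXcompl, toReal_compl' hmeasX]


lemma toReal_prob_le_one [IsProbabilityMeasure μ] {s : Set Ω} : (μ s).toReal ≤ 1 := by
  have h := prob_le_one (μ := μ) (s := s)
  have := ENNReal.toReal_mono ENNReal.one_ne_top h
  simpa using this

lemma tail_upper [IsProbabilityMeasure μ] [IsProbabilityMeasure ν]
    (hX : Measurable X) (hXs : ∀ n, Measurable (Xs n))
    (hind : iIndepFun Xs ν)
    (hd : ∀ n, Measure.map (Xs n) ν = Measure.map X μ)
    (h2 : Integrable (fun ω => ‖X ω‖ ^ 2) μ)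
    {N : ℕ} (hN : 0 < N) {t : ℝ} (ht : 0 < t)
    (hta : 2 * (∫ ω, (⨆ j : Fin N, ‖Xs j.val ω‖) ∂ν) < t) :
    (μ {ω | t ≤ ‖X ω‖}).toReal ≤ 1 / N := by
  set p := (μ {ω | t ≤ ‖X ω‖}).toReal with hp
  by_contra hcon
  push_neg at hcon
  have hNR : (1:ℝ) ≤ (N:ℝ) := by exact_mod_cast hN
  have hNne : (N:ℝ) ≠ 0 := by positivity
  have hp1 : p ≤ 1 := toReal_prob_le_one
  have h1N : (1:ℝ)/N ≤ 1 := by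
    rw [div_le_one (by positivity)]; exact hNR
  have hint := sup_int hX hXs hd h2 N
  have hmarkov := mul_meas_ge_le_integral_of_nonneg
    (Filter.Eventually.of_forall (sup_nonneg' (Xs := Xs) N)) hint t
  rw [measureReal_def] at hmarkov
  have htail : (ν {ω | t ≤ ⨆ j : Fin N, ‖Xs j.val ω‖}).toReal < 1/2 := by
    have h0 : 0 ≤ (ν {ω | t ≤ ⨆ j : Fin N, ‖Xs j.val ω‖}).toReal := ENNReal.toReal_nonneg
    nlinarith
  rw [tail_prod hX hXs hind hd hN t] at htail
  have hb3 : (1 - p)^N ≤ (1 - 1/N)^N :=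
    pow_le_pow_left₀ (by linarith) (by linarith [hcon]) N
  have hb4 : 1 - 1/(N:ℝ) ≤ Real.exp (-(1/N)) := by
    have := Real.add_one_le_exp (-(1/(N:ℝ)))
    linarith
  have hb5 : (1 - 1/(N:ℝ))^N ≤ Real.exp (-(1/N)) ^ N :=
    pow_le_pow_left₀ (by linarith) hb4 N
  have hb6 : Real.exp (-(1/(N:ℝ))) ^ N = Real.exp (-1) := by
    rw [← Real.exp_nat_mul]
    congr 1
    field_simp
  have hb7 : Real.exp (-1) < 1/2 := by
    have h2e : (2:ℝ) < Real.exp 1 := by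
      have := Real.exp_one_gt_d9
      linarith
    rw [Real.exp_neg]
    rw [inv_lt_comm₀ (by linarith [Real.exp_pos (1:ℝ)]) (by norm_num)]
    linarith
  nlinarith [hb3, hb5, hb6.le, hb7, htail]

lemma pz [IsProbabilityMeasure ν] {S : Ω' → ℝ} {c₂ : ℝ}
    (hSm : Measurable S) (hS0 : ∀ ω, 0 ≤ S ω)
    (hSi : Integrable S ν) (hSi2 : Integrable (fun ω => S ω ^ 2) ν)
    (ha : 0 < ∫ ω, S ω ∂ν) (hq : c₂ * ∫ ω, S ω ^ 2 ∂ν ≤ (∫ ω, S ω ∂ν) ^ 2) :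
    c₂ / 4 ≤ (ν {ω | (∫ ω', S ω' ∂ν) / 2 ≤ S ω}).toReal := by
  set a := ∫ ω', S ω' ∂ν with hadef
  set q := ∫ ω', S ω' ^ 2 ∂ν with hqdef
  set A := {ω | a / 2 ≤ S ω} with hAdef
  have hAm : MeasurableSet A := measurableSet_le measurable_const hSm
  set r := (ν A).toReal with hrdef
  have hr0 : 0 ≤ r := ENNReal.toReal_nonneg
  have hr1 : r ≤ 1 := toReal_prob_le_one
  have hq0 : 0 ≤ q := integral_nonneg fun ω => sq_nonneg _
  have hsplit : (∫ ω in A, S ω ∂ν) + (∫ ω in Aᶜ, S ω ∂ν) = a := integral_add_compl hAm hSi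
  have hcompl_le : ∫ ω in Aᶜ, S ω ∂ν ≤ a / 2 := by
    have h1 : ∫ ω in Aᶜ, S ω ∂ν ≤ ∫ _ in Aᶜ, a / 2 ∂ν := by
      refine setIntegral_mono_on hSi.integrableOn
        ((integrable_const _).integrableOn) hAm.compl ?_
      intro ω hω
      have hω' : ¬ a/2 ≤ S ω := hω
      linarith [not_le.mp hω']
    have h2 : ∫ _ in Aᶜ, a / 2 ∂ν = (ν Aᶜ).toReal * (a/2) := by
      rw [setIntegral_const]; simp [smul_eq_mul, measureReal_def]
    have h3 : (ν Aᶜ).toReal ≤ 1 := toReal_prob_le_one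
    have h4 : (0:ℝ) ≤ (ν Aᶜ).toReal := ENNReal.toReal_nonneg
    calc ∫ ω in Aᶜ, S ω ∂ν ≤ (ν Aᶜ).toReal * (a/2) := by rw [← h2]; exact h1
      _ ≤ 1 * (a/2) := by
          apply mul_le_mul_of_nonneg_right h3
          linarith
      _ = a/2 := by ring
  have hstep1 : a / 2 ≤ ∫ ω in A, S ω ∂ν := by linarith
  have hkey : ∀ L : ℝ, 0 < L → a ≤ L * q + L⁻¹ * r := by
    intro L hL
    have hpt : ∀ ω ∈ A, S ω ≤ (L * S ω ^ 2 + L⁻¹) / 2 := by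
      intro ω _
      rw [le_div_iff₀ (by norm_num : (0:ℝ) < 2)]
      nlinarith [sq_nonneg (L * S ω - 1), inv_mul_cancel₀ (ne_of_gt hL),
        inv_nonneg.mpr hL.le, sq_nonneg (S ω), mul_pos hL hL]
    have h1 : ∫ ω in A, S ω ∂ν ≤ ∫ ω in A, (L * S ω ^ 2 + L⁻¹) / 2 ∂ν :=
      setIntegral_mono_on hSi.integrableOn
        (((hSi2.const_mul L).add (integrable_const _)).div_const 2).integrableOn hAm hpt
    have h2 : ∫ ω in A, (L * S ω ^ 2 + L⁻¹)/2 ∂ν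
        = (L * ∫ ω in A, S ω ^ 2 ∂ν + L⁻¹ * r) / 2 := by
      rw [integral_div, integral_add ((hSi2.const_mul L).integrableOn)
        ((integrable_const _).integrableOn), integral_const_mul, setIntegral_const]
      simp only [hrdef, smul_eq_mul, mul_comm, measureReal_def]
    have h3 : ∫ ω in A, S ω ^ 2 ∂ν ≤ q :=
      setIntegral_le_integral hSi2 (Filter.Eventually.of_forall fun ω => sq_nonneg _)
    have h4 : (L * ∫ ω in A, S ω ^ 2 ∂ν + L⁻¹ * r) / 2 ≤ (L * q + L⁻¹ * r) / 2 := by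
      have := mul_le_mul_of_nonneg_left h3 hL.le
      linarith
    have h5 : a / 2 ≤ (L * q + L⁻¹ * r) / 2 := hstep1.trans (h1.trans (h2 ▸ h4))
    linarith
  have hqpos : 0 < q := by
    rcases lt_or_eq_of_le hq0 with h | h
    · exact h
    · exfalso
      have hLpos : 0 < (r + 1) / a := by positivity
      have h1 := hkey ((r + 1) / a) hLpos
      rw [← h, inv_div] at h1
      have h2 : a / (r + 1) * r < a := by
        rw [div_mul_eq_mul_div, div_lt_iff₀ (by linarith : (0:ℝ) < r + 1)]
        nlinarith
      simp only [mul_zero] at h1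
      linarith
  have hL2 : 0 < a / (2 * q) := by positivity
  have h1 := hkey (a / (2 * q)) hL2
  rw [inv_div] at h1
  have e1 : a / (2 * q) * q = a / 2 := by
    field_simp
  rw [e1] at h1
  have h2 : a / 2 ≤ 2 * q / a * r := by linarith
  rw [div_mul_eq_mul_div, le_div_iff₀ ha] at h2
  nlinarith [hqpos, hq]


lemma int_norm_pos [IsProbabilityMeasure μ] (hX : Measurable X)
    (hX0 : ¬ (X =ᵐ[μ] fun _ => 0)) (h2 : Integrable (fun ω => ‖X ω‖ ^ 2) μ) :
    0 < ∫ ω, ‖X ω‖ ∂μ := by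
  rw [integral_pos_iff_support_of_nonneg (fun ω => norm_nonneg _) (norm_int hX h2)]
  have hsupp : Function.support (fun ω => ‖X ω‖) = {ω | ¬ X ω = 0} := by
    ext ω
    simp [Function.support, norm_ne_zero_iff]
  rw [hsupp]
  rw [pos_iff_ne_zero]
  intro h
  exact hX0 (by rw [Filter.EventuallyEq, ae_iff]; simpa using h)

lemma int_sup_ge [IsProbabilityMeasure μ] [IsProbabilityMeasure ν]
    (hX : Measurable X) (hXs : ∀ n, Measurable (Xs n))
    (hd : ∀ n, Measure.map (Xs n) ν = Measure.map X μ)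
    (h2 : Integrable (fun ω => ‖X ω‖ ^ 2) μ) {N : ℕ} (hN : 0 < N) :
    ∫ ω, ‖X ω‖ ∂μ ≤ ∫ ω, (⨆ j : Fin N, ‖Xs j.val ω‖) ∂ν := by
  haveI : Nonempty (Fin N) := ⟨⟨0, hN⟩⟩
  have h0 : ∫ ω, ‖X ω‖ ∂μ = ∫ ω, ‖Xs 0 ω‖ ∂ν :=
    (transfer_integral measurable_norm hX hXs (hd 0)).symm
  rw [h0]
  refine integral_mono (transfer_int measurable_norm hX hXs (hd 0) (norm_int hX h2))
    (sup_int hX hXs hd h2 N) ?_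
  intro ω
  exact le_ciSup (f := fun j : Fin N => ‖Xs j.val ω‖) ((Set.finite_range _).bddAbove) (⟨0, hN⟩ : Fin N)

end Helpers

lemma one_sided {B : Type*} [NormedAddCommGroup B] [MeasurableSpace B] [BorelSpace B]
    {Ω₁ Ω₂ Ω₃ Ω₄ : Type*}
    [MeasurableSpace Ω₁] [MeasurableSpace Ω₂] [MeasurableSpace Ω₃] [MeasurableSpace Ω₄]
    (P₁ : Measure Ω₁) [IsProbabilityMeasure P₁] (P₂ : Measure Ω₂) [IsProbabilityMeasure P₂]
    (P₃ : Measure Ω₃) [IsProbabilityMeasure P₃] (P₄ : Measure Ω₄) [IsProbabilityMeasure P₄]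
    (X : Ω₁ → B) (Y : Ω₂ → B) (Xs : ℕ → Ω₃ → B) (Ys : ℕ → Ω₄ → B)
    (c₁ c₂ : ℝ) (hc₁ : 0 < c₁) (hc₂ : 0 < c₂)
    (hX : Measurable X) (hY : Measurable Y)
    (hXs : ∀ n, Measurable (Xs n)) (hYs : ∀ n, Measurable (Ys n))
    (hX0 : ¬ (X =ᵐ[P₁] fun _ => 0))
    (hX2 : Integrable (fun ω => ‖X ω‖ ^ 2) P₁) (hY2 : Integrable (fun ω => ‖Y ω‖ ^ 2) P₂)
    (hXind : ProbabilityTheory.iIndepFun Xs P₃)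
    (hYind : ProbabilityTheory.iIndepFun Ys P₄)
    (hXd : ∀ n, Measure.map (Xs n) P₃ = Measure.map X P₁)
    (hYd : ∀ n, Measure.map (Ys n) P₄ = Measure.map Y P₂)
    (hcmp : ∀ N : ℕ, 0 < N → ∫ ω, (⨆ j : Fin N, ‖Ys j.val ω‖) ∂P₄
      ≤ c₁ * ∫ ω, (⨆ j : Fin N, ‖Xs j.val ω‖) ∂P₃)
    (hsqX : ∀ N : ℕ, 0 < N → c₂ * ∫ ω, (⨆ j : Fin N, ‖Xs j.val ω‖) ^ 2 ∂P₃
      ≤ (∫ ω, (⨆ j : Fin N, ‖Xs j.val ω‖) ∂P₃) ^ 2)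
    (α : ℝ) (hα : 0 < α) :
    (P₂ {ω | α ≤ ‖Y ω‖}).toReal
      ≤ (4*c₁ + 8/c₂) * (P₁ {ω | (4*c₁ + 8/c₂)⁻¹ * α ≤ ‖X ω‖}).toReal := by
  classical
  set c : ℝ := 4*c₁ + 8/c₂ with hc
  have hcpos : 0 < c := by positivity
  set F : ℝ → ℝ := fun t => (P₁ {ω | t ≤ ‖X ω‖}).toReal with hF
  set G : ℝ → ℝ := fun t => (P₂ {ω | t ≤ ‖Y ω‖}).toReal with hG
  show G α ≤ c * F (c⁻¹ * α)
  have hXnorm : 0 < ∫ ω, ‖X ω‖ ∂P₁ := int_norm_pos hX hX0 hX2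
  have haN : ∀ N : ℕ, 0 < N → 0 < ∫ ω, (⨆ j : Fin N, ‖Xs j.val ω‖) ∂P₃ :=
    fun N hN => hXnorm.trans_le (int_sup_ge hX hXs hXd hX2 hN)
  have hF0 : ∀ t, 0 ≤ F t := fun t => ENNReal.toReal_nonneg
  have hFmono : ∀ s t : ℝ, s ≤ t → F t ≤ F s := fun s t hst =>
    ENNReal.toReal_mono (measure_ne_top _ _) (measure_mono (fun ω hω => le_trans hst hω))
  -- Paley-Zygmund lower bound for X
  have hPZ : ∀ N : ℕ, 0 < N →
      c₂/4/N ≤ F ((∫ ω, (⨆ j : Fin N, ‖Xs j.val ω‖) ∂P₃) / 2) := by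
    intro N hN
    have hNR : (1:ℝ) ≤ (N:ℝ) := by exact_mod_cast hN
    have hpz := pz (sup_meas hXs N) (sup_nonneg' N) (sup_int hX hXs hXd hX2 N)
      (sup_sq_int hX hXs hXd hX2 N) (haN N hN) (hsqX N hN)
    rw [tail_prod hX hXs hXind hXd hN ((∫ ω, (⨆ j : Fin N, ‖Xs j.val ω‖) ∂P₃) / 2)] at hpz
    set p : ℝ := F ((∫ ω, (⨆ j : Fin N, ‖Xs j.val ω‖) ∂P₃) / 2) with hpdef
    have hp0 : 0 ≤ p := hF0 _
    have hp1 : p ≤ 1 := toReal_prob_le_one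
    by_contra hcon
    push_neg at hcon
    have hc24 : c₂/4 ≤ 1 := by
      nlinarith [pow_nonneg (by linarith : (0:ℝ) ≤ 1 - p) N]
    have hδN : c₂/4/N ≤ 1 := by
      rw [div_le_one (by positivity)]
      linarith
    have hbern : 1 - c₂/4 ≤ (1 - c₂/4/N)^N := by
      have h := one_add_mul_le_pow (a := -(c₂/4/(N:ℝ)))
        (by nlinarith [div_nonneg (by linarith : (0:ℝ) ≤ c₂/4) (by positivity : (0:ℝ) ≤ (N:ℝ))]) N
      have he : 1 + (N:ℝ) * (-(c₂/4/N)) = 1 - c₂/4 := by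
        field_simp
        ring
      rw [he] at h
      rw [← sub_eq_add_neg] at h
      exact h
    have hmono : (1 - c₂/4/N)^N < (1 - p)^N :=
      pow_lt_pow_left₀ (by linarith) (by linarith) (Nat.pos_iff_ne_zero.mp hN)
    linarith
  -- Markov upper bound for Y
  have hTailY : ∀ N : ℕ, 0 < N → ∀ t : ℝ, 0 < t →
      2 * ∫ ω, (⨆ j : Fin N, ‖Ys j.val ω‖) ∂P₄ < t → G t ≤ 1/N :=
    fun N hN t ht h => tail_upper hY hYs hYind hYd hY2 hN ht h
  have hG1 : G α ≤ 1 := toReal_prob_le_one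
  by_cases hall : ∀ N : ℕ, 0 < N → 2 * ∫ ω, (⨆ j : Fin N, ‖Ys j.val ω‖) ∂P₄ < α
  · have hG0 : G α ≤ 0 := by
      by_contra hg
      push_neg at hg
      obtain ⟨n, hn⟩ := exists_nat_one_div_lt hg
      have h1 := hTailY (n+1) (Nat.succ_pos n) α hα (hall (n+1) (Nat.succ_pos n))
      have : ((n:ℝ)+1) = ((n+1 : ℕ):ℝ) := by push_cast; ring
      rw [this] at hn
      linarith
    have : 0 ≤ c * F (c⁻¹ * α) := by positivity
    linarith
  · push_neg at hall
    have hex : ∃ N, 0 < N ∧ α ≤ 2 * ∫ ω, (⨆ j : Fin N, ‖Ys j.val ω‖) ∂P₄ := by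
      obtain ⟨N₀, hpos, hle⟩ := hall
      exact ⟨N₀, hpos, hle⟩
    set M := Nat.find hex with hM
    obtain ⟨hMpos, hMle⟩ := Nat.find_spec hex
    have hMR : (1:ℝ) ≤ (M:ℝ) := by exact_mod_cast hMpos
    have hbax : α ≤ 2 * c₁ * ∫ ω, (⨆ j : Fin M, ‖Xs j.val ω‖) ∂P₃ := by
      have := hcmp M hMpos
      linarith
    have hαa : c⁻¹ * α ≤ (∫ ω, (⨆ j : Fin M, ‖Xs j.val ω‖) ∂P₃) / 2 := by
      rw [inv_mul_le_iff₀ hcpos]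
      have haM := haN M hMpos
      have h8 : 0 < 8/c₂ := by positivity
      nlinarith
    have hFα : c₂/4/M ≤ F (c⁻¹*α) := le_trans (hPZ M hMpos) (hFmono _ _ hαa)
    have hcF : 2/(M:ℝ) ≤ c * F (c⁻¹*α) := by
      have h1 : c * (c₂/4/M) ≤ c * F (c⁻¹*α) :=
        mul_le_mul_of_nonneg_left hFα hcpos.le
      have h2 : 2/(M:ℝ) ≤ c * (c₂/4/M) := by
        rw [div_le_iff₀ (by positivity : (0:ℝ) < (M:ℝ))]
        have : c * (c₂/4/M) * M = c * (c₂/4) := by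
          field_simp
        rw [this]
        have : 8/c₂ * (c₂/4) = 2 := by field_simp; ring
        nlinarith
      linarith
    rcases eq_or_lt_of_le (Nat.succ_le_of_lt hMpos) with hM1 | hM2
    · -- M = 1
      have hMR1 : (M:ℝ) = 1 := by exact_mod_cast hM1.symm
      rw [hMR1] at hcF
      norm_num at hcF
      linarith
    · -- 2 ≤ M
      have hK : M - 1 < M := Nat.sub_lt hMpos one_pos
      have hmin := Nat.find_min hex hK
      have hKpos : 0 < M - 1 := by omega
      have hlt : 2 * ∫ ω, (⨆ j : Fin (M-1), ‖Ys j.val ω‖) ∂P₄ < α := by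
        by_contra hcontra
        push_neg at hcontra
        exact hmin ⟨hKpos, hcontra⟩
      have hGK := hTailY (M-1) hKpos α hα hlt
      have hcast : ((M-1 : ℕ):ℝ) = (M:ℝ) - 1 := by
        have : (1:ℕ) ≤ M := hMpos
        push_cast [Nat.cast_sub this]
        ring
      rw [hcast] at hGK
      have hM2R : (2:ℝ) ≤ (M:ℝ) := by exact_mod_cast hM2
      have h1K : 1/((M:ℝ)-1) ≤ 2/(M:ℝ) := by
        rw [div_le_div_iff₀ (by linarith) (by linarith)]
        linarith
      linarith

/-- **Main Lemma.** Suppose `X` and `Y` are Banach-valued random variables, neither almost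
surely zero, with finite second moments, and `(X_n)`, `(Y_n)` are sequences of independent
copies of `X` and `Y` respectively.  If for every positive integer `N` the expectations of
`sup_{1≤j≤N} ‖X_j‖` and `sup_{1≤j≤N} ‖Y_j‖` are equivalent up to `c₁`, and both suprema
satisfy the square-function condition with constant `c₂`, then the distribution functions of
`‖X‖` and `‖Y‖` are equivalent up to a constant `c` depending only on `c₁` and `c₂`. -/
theorem distribution_equivalence_principle (c₁ c₂ : ℝ) (hc₁ : 0 < c₁) (hc₂ : 0 < c₂) :
    ∃ c : ℝ, 0 < c ∧
      ∀ (B : Type*) [NormedAddCommGroup B] [NormedSpace ℝ B] [CompleteSpace B]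
        [TopologicalSpace.SeparableSpace B] [MeasurableSpace B] [BorelSpace B]
        (Ω₁ Ω₂ Ω₃ Ω₄ : Type*)
        [MeasurableSpace Ω₁] [MeasurableSpace Ω₂] [MeasurableSpace Ω₃] [MeasurableSpace Ω₄]
        (P₁ : Measure Ω₁) [IsProbabilityMeasure P₁] (P₂ : Measure Ω₂) [IsProbabilityMeasure P₂]
        (P₃ : Measure Ω₃) [IsProbabilityMeasure P₃] (P₄ : Measure Ω₄) [IsProbabilityMeasure P₄]
        (X : Ω₁ → B) (Y : Ω₂ → B) (Xs : ℕ → Ω₃ → B) (Ys : ℕ → Ω₄ → B),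
        Measurable X → Measurable Y →
        (∀ n, Measurable (Xs n)) → (∀ n, Measurable (Ys n)) →
        -- neither `X` nor `Y` is almost surely zero
        ¬ (X =ᵐ[P₁] fun _ => 0) → ¬ (Y =ᵐ[P₂] fun _ => 0) →
        -- finite second moments
        Integrable (fun ω => ‖X ω‖ ^ 2) P₁ → Integrable (fun ω => ‖Y ω‖ ^ 2) P₂ →
        -- `(X_n)` and `(Y_n)` are independent, with the same distributions as `X` and `Y`
        ProbabilityTheory.iIndepFun Xs P₃ →
        ProbabilityTheory.iIndepFun Ys P₄ →
        (∀ n, Measure.map (Xs n) P₃ = Measure.map X P₁) →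
        (∀ n, Measure.map (Ys n) P₄ = Measure.map Y P₂) →
        -- hypotheses (i), (ii), (iii), for every positive integer N
        (∀ N : ℕ, 0 < N →
          (c₁⁻¹ * ∫ ω, (⨆ j : Fin N, ‖Xs j.val ω‖) ∂P₃
              ≤ ∫ ω, (⨆ j : Fin N, ‖Ys j.val ω‖) ∂P₄) ∧
          (∫ ω, (⨆ j : Fin N, ‖Ys j.val ω‖) ∂P₄
              ≤ c₁ * ∫ ω, (⨆ j : Fin N, ‖Xs j.val ω‖) ∂P₃) ∧
          c₂ * ∫ ω, (⨆ j : Fin N, ‖Xs j.val ω‖) ^ 2 ∂P₃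
              ≤ (∫ ω, (⨆ j : Fin N, ‖Xs j.val ω‖) ∂P₃) ^ 2 ∧
          c₂ * ∫ ω, (⨆ j : Fin N, ‖Ys j.val ω‖) ^ 2 ∂P₄
              ≤ (∫ ω, (⨆ j : Fin N, ‖Ys j.val ω‖) ∂P₄) ^ 2) →
        ∀ α : ℝ, 0 < α →
          c⁻¹ * (P₁ {ω | c * α ≤ ‖X ω‖}).toReal ≤ (P₂ {ω | α ≤ ‖Y ω‖}).toReal ∧
          (P₂ {ω | α ≤ ‖Y ω‖}).toReal ≤ c * (P₁ {ω | c⁻¹ * α ≤ ‖X ω‖}).toReal := by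
  refine ⟨4*c₁ + 8/c₂, by positivity, ?_⟩
  intro B _ _ _ _ _ _ Ω₁ Ω₂ Ω₃ Ω₄ _ _ _ _ P₁ _ P₂ _ P₃ _ P₄ _ X Y Xs Ys
    hX hY hXs hYs hX0 hY0 hX2 hY2 hXind hYind hXd hYd hyp α hα
  set c : ℝ := 4*c₁ + 8/c₂ with hc
  have hcpos : 0 < c := by positivity
  have hcmpYX : ∀ N : ℕ, 0 < N → ∫ ω, (⨆ j : Fin N, ‖Ys j.val ω‖) ∂P₄
      ≤ c₁ * ∫ ω, (⨆ j : Fin N, ‖Xs j.val ω‖) ∂P₃ := fun N hN => (hyp N hN).2.1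
  have hcmpXY : ∀ N : ℕ, 0 < N → ∫ ω, (⨆ j : Fin N, ‖Xs j.val ω‖) ∂P₃
      ≤ c₁ * ∫ ω, (⨆ j : Fin N, ‖Ys j.val ω‖) ∂P₄ := by
    intro N hN
    have h := (hyp N hN).1
    have e : c₁ * (c₁⁻¹ * ∫ ω, (⨆ j : Fin N, ‖Xs j.val ω‖) ∂P₃)
        = ∫ ω, (⨆ j : Fin N, ‖Xs j.val ω‖) ∂P₃ := by
      field_simp
    have h2 := mul_le_mul_of_nonneg_left h hc₁.le
    rw [e] at h2
    exact h2
  have hsqX : ∀ N : ℕ, 0 < N → c₂ * ∫ ω, (⨆ j : Fin N, ‖Xs j.val ω‖) ^ 2 ∂P₃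
      ≤ (∫ ω, (⨆ j : Fin N, ‖Xs j.val ω‖) ∂P₃) ^ 2 := fun N hN => (hyp N hN).2.2.1
  have hsqY : ∀ N : ℕ, 0 < N → c₂ * ∫ ω, (⨆ j : Fin N, ‖Ys j.val ω‖) ^ 2 ∂P₄
      ≤ (∫ ω, (⨆ j : Fin N, ‖Ys j.val ω‖) ∂P₄) ^ 2 := fun N hN => (hyp N hN).2.2.2
  constructor
  · -- lower bound : apply one_sided with roles of X and Y swapped, at c * α
    have h := one_sided P₂ P₁ P₄ P₃ Y X Ys Xs c₁ c₂ hc₁ hc₂ hY hX hYs hXs hY0 hY2 hX2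
      hYind hXind hYd hXd hcmpXY hsqY (c * α) (by positivity)
    have hset : {ω | (4*c₁ + 8/c₂)⁻¹ * (c * α) ≤ ‖Y ω‖} = {ω | α ≤ ‖Y ω‖} := by
      have : (4*c₁ + 8/c₂)⁻¹ * (c * α) = α := by
        rw [← hc]
        exact inv_mul_cancel_left₀ hcpos.ne' α
      rw [this]
    rw [hset, ← hc] at h
    rw [inv_mul_le_iff₀ hcpos]
    exact h
  · -- upper bound : direct application
    have h := one_sided P₁ P₂ P₃ P₄ X Y Xs Ys c₁ c₂ hc₁ hc₂ hX hY hXs hYs hX0 hX2 hY2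
      hXind hYind hXd hYd hcmpYX hsqX α hα
    rw [← hc] at h
    exact h
end

section
/- For all real numbers 0 < p < q < ∞ there exists a constant K_{p,q} > 0 such that for every Banach space B, every positive integer N, all a_1, …, a_N ∈ B, and every Rademacher sequence (r_n) on a probability space (Ω, P): (E‖Σ_{n=1}^N a_n r_n‖^q)^{1/q} ≤ K_{p,q}·(E‖Σ_{n=1}^N a_n r_n‖^p)^{1/p}. -/
open MeasureTheory

/-- A Rademacher sequence: independent random variables each taking the values `1` and `-1`
with probability `1/2`. -/
def IsRademacher {Ω : Type*} [MeasurableSpace Ω] (P : Measure Ω) (r : ℕ → Ω → ℝ) : Prop :=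
  (∀ n, Measurable (r n)) ∧
  ProbabilityTheory.iIndepFun (m := fun _ => inferInstance) r P ∧
  ∀ n, P {ω | r n ω = 1} = 1/2 ∧ P {ω | r n ω = -1} = 1/2

open Finset
namespace KK


def eps (b : Bool) : ℝ := if b then 1 else -1

lemma eps_not (b : Bool) : eps (!b) = - eps b := by cases b <;> simp [eps]
lemma norm_eps (b : Bool) : ‖eps b‖ = 1 := by cases b <;> simp [eps]
lemma norm_eps_smul {B : Type*} [NormedAddCommGroup B] [NormedSpace ℝ B] (b : Bool) (x : B) :
    ‖eps b • x‖ = ‖x‖ := by cases b <;> simp [eps, norm_smul]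

lemma eps_inj : Function.Injective eps := by
  classical
  intro a b h; cases a <;> cases b <;> simp [eps] at h ⊢ <;> norm_num at h

section cnt
variable {N : ℕ}

open Classical in
noncomputable def cnt (P : (Fin N → Bool) → Prop) : ℕ := (Finset.univ.filter P).card

lemma cnt_eq (P : (Fin N → Bool) → Prop) [DecidablePred P] :
    cnt P = (Finset.univ.filter P).card := by
  classical
  unfold cnt
  congr 1
  apply Finset.filter_congr_decidable

lemma cnt_le_pow (P : (Fin N → Bool) → Prop) : cnt P ≤ 2 ^ N := by
  classical
  calc cnt P ≤ Finset.univ.card := by rw [cnt_eq]; exact Finset.card_filter_le _ _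
  _ = 2 ^ N := by simp [Finset.card_univ]

lemma cnt_mono {P Q : (Fin N → Bool) → Prop} (h : ∀ σ, P σ → Q σ) : cnt P ≤ cnt Q := by
  classical
  rw [cnt_eq, cnt_eq]
  exact Finset.card_le_card (Finset.monotone_filter_right _ (fun σ _ => h σ))

lemma cnt_le_add {P Q R : (Fin N → Bool) → Prop} (h : ∀ σ, P σ → Q σ ∨ R σ) :
    cnt P ≤ cnt Q + cnt R := by
  classical
  rw [cnt_eq, cnt_eq, cnt_eq]
  refine le_trans (Finset.card_le_card (fun σ hσ => ?_)) (Finset.card_union_le _ _)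
  simp only [Finset.mem_filter, Finset.mem_union, Finset.mem_univ, true_and] at hσ ⊢
  exact h σ hσ

lemma cnt_comp {P : (Fin N → Bool) → Prop} (f : (Fin N → Bool) → (Fin N → Bool))
    (hf : Function.Involutive f) : cnt (fun σ => P (f σ)) = cnt P := by
  classical
  rw [cnt_eq, cnt_eq]
  apply Finset.card_nbij' f f
  · intro σ hσ; simp only [Finset.mem_coe, Finset.mem_filter, Finset.mem_univ, true_and] at hσ ⊢; exact hσ
  · intro σ hσ; simp only [Finset.mem_coe, Finset.mem_filter, Finset.mem_univ, true_and] at hσ ⊢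
    rw [hf σ]; exact hσ
  · intro σ _; exact hf σ
  · intro σ _; exact hf σ

lemma sum_ite_cnt (P : (Fin N → Bool) → Prop) [DecidablePred P] (c : ℝ) :
    ∑ σ : Fin N → Bool, (if P σ then c else 0) = (cnt P : ℝ) * c := by
  rw [cnt_eq, ← Finset.sum_filter, Finset.sum_const, nsmul_eq_mul]

end cnt
lemma sum_cnt_le {m : ℕ} {A : ℕ → (Fin N → Bool) → Prop} {X : (Fin N → Bool) → Prop}
    (hd : ∀ σ j k, j < k → A j σ → A k σ → False) :
    ∑ k ∈ Finset.range m, cnt (fun σ => A k σ ∧ X σ) ≤ cnt X := by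
  classical
  simp only [cnt_eq]
  have hdisj : ∀ j ∈ Finset.range m, ∀ k ∈ Finset.range m, j ≠ k →
      Disjoint (Finset.univ.filter (fun σ => A j σ ∧ X σ))
        (Finset.univ.filter (fun σ => A k σ ∧ X σ)) := by
    intro j _ k _ hne
    rw [Finset.disjoint_left]
    intro σ hj hk
    simp only [Finset.mem_filter, Finset.mem_univ, true_and] at hj hk
    rcases Nat.lt_or_ge j k with h | h
    · exact hd σ j k h hj.1 hk.1
    · exact hd σ k j (lt_of_le_of_ne h (Ne.symm hne)) hk.1 hj.1
  calc ∑ k ∈ Finset.range m, (Finset.univ.filter (fun σ => A k σ ∧ X σ)).card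
      = ((Finset.range m).biUnion fun k => Finset.univ.filter (fun σ => A k σ ∧ X σ)).card :=
        (Finset.card_biUnion hdisj).symm
    _ ≤ (Finset.univ.filter X).card := by
        apply Finset.card_le_card
        intro σ hσ
        simp only [Finset.mem_biUnion, Finset.mem_filter, Finset.mem_univ, true_and] at hσ ⊢
        obtain ⟨k, _, _, hX⟩ := hσ
        exact hX

lemma cnt_le_sum {m : ℕ} {A : ℕ → (Fin N → Bool) → Prop} {P : (Fin N → Bool) → Prop}
    (h : ∀ σ, P σ → ∃ k ∈ Finset.range m, A k σ) :
    cnt P ≤ ∑ k ∈ Finset.range m, cnt (A k) := by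
  classical
  simp only [cnt_eq]
  calc (Finset.univ.filter P).card
      ≤ ((Finset.range m).biUnion (fun k => Finset.univ.filter (A k))).card := by
        apply Finset.card_le_card
        intro σ hσ
        simp only [Finset.mem_filter, Finset.mem_univ, true_and] at hσ
        obtain ⟨k, hk, hA⟩ := h σ hσ
        simp only [Finset.mem_biUnion, Finset.mem_filter, Finset.mem_univ, true_and]
        exact ⟨k, hk, hA⟩
    _ ≤ ∑ k ∈ Finset.range m, (Finset.univ.filter (A k)).card := Finset.card_biUnion_le

def splice (k : ℕ) (σ τ : Fin N → Bool) : Fin N → Bool :=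
  fun n => if (n : ℕ) < k then σ n else τ n

def DepLT (k : ℕ) (P : (Fin N → Bool) → Prop) : Prop :=
  ∀ σ τ, (∀ n : Fin N, (n : ℕ) < k → σ n = τ n) → (P σ ↔ P τ)

def DepGE (k : ℕ) (P : (Fin N → Bool) → Prop) : Prop :=
  ∀ σ τ, (∀ n : Fin N, k ≤ (n : ℕ) → σ n = τ n) → (P σ ↔ P τ)

lemma cnt_mul_cnt {k : ℕ} {P Q : (Fin N → Bool) → Prop}
    (hP : DepLT k P) (hQ : DepGE k Q) :
    cnt (fun σ => P σ ∧ Q σ) * 2 ^ N = cnt P * cnt Q := by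
  classical
  simp only [cnt_eq]
  have hcard : (2:ℕ) ^ N = (Finset.univ : Finset (Fin N → Bool)).card := by
    simp [Finset.card_univ]
  rw [hcard, ← Finset.card_product, ← Finset.card_product]
  apply Finset.card_nbij' (fun st => (splice k st.1 st.2, splice k st.2 st.1))
      (fun st => (splice k st.1 st.2, splice k st.2 st.1))
  · rintro ⟨σ, τ⟩ hst
    simp only [Finset.coe_product, Set.mem_prod, Finset.mem_coe, Finset.mem_product, Finset.mem_filter, Finset.mem_univ, true_and, and_true] at hst ⊢
    constructor
    · exact (hP σ (splice k σ τ) (fun n hn => by simp [splice, hn])).1 hst.1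
    · exact (hQ σ (splice k τ σ) (fun n hn => by simp [splice, Nat.not_lt.2 hn])).1 hst.2
  · rintro ⟨σ, τ⟩ hst
    simp only [Finset.coe_product, Set.mem_prod, Finset.mem_coe, Finset.mem_product, Finset.mem_filter, Finset.mem_univ, true_and, and_true] at hst ⊢
    refine ⟨?_, ?_⟩
    · exact (hP σ (splice k σ τ) (fun n hn => by simp [splice, hn])).1 hst.1
    · exact (hQ τ (splice k σ τ) (fun n hn => by simp [splice, Nat.not_lt.2 hn])).1 hst.2
  · rintro ⟨σ, τ⟩ _
    simp only [Prod.mk.injEq]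
    constructor <;> (funext n; by_cases hn : (n:ℕ) < k <;> simp [splice, hn])
  · rintro ⟨σ, τ⟩ _
    simp only [Prod.mk.injEq]
    constructor <;> (funext n; by_cases hn : (n:ℕ) < k <;> simp [splice, hn])
variable {B : Type*} [NormedAddCommGroup B] [NormedSpace ℝ B] {N : ℕ}

def sg (a : Fin N → B) (σ : Fin N → Bool) : B := ∑ n, eps (σ n) • a n

def spart (a : Fin N → B) (k : ℕ) (σ : Fin N → Bool) : B :=
  ∑ n ∈ Finset.univ.filter (fun n : Fin N => (n : ℕ) < k), eps (σ n) • a n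

def ttail (a : Fin N → B) (k : ℕ) (σ : Fin N → Bool) : B :=
  ∑ n ∈ Finset.univ.filter (fun n : Fin N => ¬ (n : ℕ) < k), eps (σ n) • a n

lemma spart_add_ttail (a : Fin N → B) (k : ℕ) (σ : Fin N → Bool) :
    spart a k σ + ttail a k σ = sg a σ :=
  Finset.sum_filter_add_sum_filter_not _ _ _

lemma spart_zero (a : Fin N → B) (σ) : spart a 0 σ = 0 := by
  simp [spart]

lemma spart_of_ge (a : Fin N → B) {k : ℕ} (hk : N ≤ k) (σ) : spart a k σ = sg a σ := by
  unfold spart sg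
  rw [Finset.filter_true_of_mem (fun n _ => lt_of_lt_of_le n.isLt hk)]

lemma spart_congr (a : Fin N → B) (k : ℕ) {σ τ : Fin N → Bool}
    (h : ∀ n : Fin N, (n : ℕ) < k → σ n = τ n) : spart a k σ = spart a k τ := by
  unfold spart
  apply Finset.sum_congr rfl
  intro n hn
  rw [h n (by simpa using hn)]

lemma ttail_congr (a : Fin N → B) (k : ℕ) {σ τ : Fin N → Bool}
    (h : ∀ n : Fin N, k ≤ (n : ℕ) → σ n = τ n) : ttail a k σ = ttail a k τ := by
  unfold ttail
  apply Finset.sum_congr rfl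
  intro n hn
  rw [h n (by simpa using Nat.le_of_not_lt (by simpa using hn))]

lemma spart_succ (a : Fin N → B) (k : ℕ) (hk : k < N) (σ) :
    spart a (k + 1) σ = spart a k σ + eps (σ ⟨k, hk⟩) • a ⟨k, hk⟩ := by
  unfold spart
  have hins : Finset.univ.filter (fun n : Fin N => (n : ℕ) < k + 1) =
      insert ⟨k, hk⟩ (Finset.univ.filter (fun n : Fin N => (n : ℕ) < k)) := by
    ext n
    simp only [Finset.mem_filter, Finset.mem_univ, true_and, Finset.mem_insert]
    constructor
    · intro h
      rcases Nat.lt_succ_iff_lt_or_eq.1 h with h | h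
      · exact Or.inr h
      · exact Or.inl (Fin.ext h)
    · rintro (rfl | h)
      · exact Nat.lt_succ_self k
      · exact Nat.lt_succ_of_lt h
  rw [hins, Finset.sum_insert (by simp), add_comm]

def flipGE (k : ℕ) (σ : Fin N → Bool) : Fin N → Bool :=
  fun n => if (n : ℕ) < k then σ n else !(σ n)

def flipLT (k : ℕ) (σ : Fin N → Bool) : Fin N → Bool :=
  fun n => if (n : ℕ) < k then !(σ n) else σ n

lemma flipGE_inv (k : ℕ) : Function.Involutive (flipGE (N := N) k) := by
  intro σ; funext n; by_cases h : (n:ℕ) < k <;> simp [flipGE, h]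

lemma flipLT_inv (k : ℕ) : Function.Involutive (flipLT (N := N) k) := by
  intro σ; funext n; by_cases h : (n:ℕ) < k <;> simp [flipLT, h]

lemma spart_flipGE (a : Fin N → B) {j k : ℕ} (hjk : j ≤ k) (σ) :
    spart a j (flipGE k σ) = spart a j σ :=
  spart_congr a j (fun n hn => by simp [flipGE, lt_of_lt_of_le hn hjk])

lemma ttail_flipLT (a : Fin N → B) (k : ℕ) (σ) :
    ttail a k (flipLT k σ) = ttail a k σ :=
  ttail_congr a k (fun n hn => by simp [flipLT, Nat.not_lt.2 hn])

lemma ttail_flipGE (a : Fin N → B) (k : ℕ) (σ) :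
    ttail a k (flipGE k σ) = - ttail a k σ := by
  unfold ttail
  rw [← Finset.sum_neg_distrib]
  apply Finset.sum_congr rfl
  intro n hn
  have hn' : ¬ (n:ℕ) < k := by simpa using hn
  simp [flipGE, hn', eps_not, neg_smul]

lemma spart_flipLT (a : Fin N → B) (k : ℕ) (σ) :
    spart a k (flipLT k σ) = - spart a k σ := by
  unfold spart
  rw [← Finset.sum_neg_distrib]
  apply Finset.sum_congr rfl
  intro n hn
  have hn' : (n:ℕ) < k := by simpa using hn
  simp [flipLT, hn', eps_not, neg_smul]

lemma sg_flipGE (a : Fin N → B) (k : ℕ) (σ) :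
    sg a (flipGE k σ) = spart a k σ - ttail a k σ := by
  rw [← spart_add_ttail a k (flipGE k σ), spart_flipGE a le_rfl, ttail_flipGE]
  abel

lemma sg_flipLT (a : Fin N → B) (k : ℕ) (σ) :
    sg a (flipLT k σ) = ttail a k σ - spart a k σ := by
  rw [← spart_add_ttail a k (flipLT k σ), spart_flipLT, ttail_flipLT]
  abel

def flipOne (n₀ : Fin N) (σ : Fin N → Bool) : Fin N → Bool :=
  Function.update σ n₀ (!(σ n₀))

lemma flipOne_inv (n₀ : Fin N) : Function.Involutive (flipOne (N := N) n₀) := by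
  intro σ; funext n
  by_cases h : n = n₀
  · subst h; simp [flipOne]
  · simp [flipOne, Function.update_of_ne h]

lemma sg_flipOne (a : Fin N → B) (n₀ : Fin N) (σ) :
    sg a σ - sg a (flipOne n₀ σ) = (2 * eps (σ n₀)) • a n₀ := by
  unfold sg
  rw [← Finset.sum_sub_distrib]
  rw [Finset.sum_eq_single n₀]
  · simp [flipOne, eps_not, two_mul, add_smul, sub_smul, neg_smul]
  · intro n _ hn
    simp [flipOne, Function.update_of_ne hn]
  · simp



section levy
variable {B : Type*} [NormedAddCommGroup B] [NormedSpace ℝ B] {N : ℕ}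

lemma cnt_congr {P Q : (Fin N → Bool) → Prop} (h : ∀ σ, P σ ↔ Q σ) : cnt P = cnt Q := by
  classical
  simp only [cnt_eq]
  congr 1
  exact Finset.filter_congr (fun σ _ => h σ)

def hitAt (a : Fin N → B) (t : ℝ) (k : ℕ) (σ : Fin N → Bool) : Prop :=
  t < ‖spart a k σ‖ ∧ ∀ j < k, ‖spart a j σ‖ ≤ t

lemma hitAt_disj (a : Fin N → B) (t : ℝ) :
    ∀ σ j k, j < k → hitAt a t j σ → hitAt a t k σ → False := fun _ j _ hjk hj hk =>
  absurd hj.1 (not_lt.2 (hk.2 j hjk))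

lemma hitAt_depLT (a : Fin N → B) (t : ℝ) (k : ℕ) : DepLT k (hitAt a t k) := by
  intro σ τ hagree
  have hsp : ∀ j ≤ k, spart a j σ = spart a j τ := fun j hj =>
    spart_congr a j (fun n hn => hagree n (lt_of_lt_of_le hn hj))
  unfold hitAt
  rw [hsp k le_rfl]
  constructor <;> (rintro ⟨h1, h2⟩; refine ⟨h1, fun j hj => ?_⟩)
  · rw [← hsp j (le_of_lt hj)]; exact h2 j hj
  · rw [hsp j (le_of_lt hj)]; exact h2 j hj

lemma ttail_depGE (a : Fin N → B) (t : ℝ) (k : ℕ) :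
    DepGE k (fun σ => t < ‖ttail a k σ‖) := by
  intro σ τ hagree
  simp only []
  rw [ttail_congr a k hagree]

lemma levy_hit (a : Fin N → B) (t : ℝ) (k : ℕ) :
    cnt (hitAt a t k) ≤ 2 * cnt (fun σ => hitAt a t k σ ∧ t < ‖sg a σ‖) := by
  have key : ∀ σ, hitAt a t k σ →
      (hitAt a t k σ ∧ t < ‖sg a σ‖) ∨ (hitAt a t k σ ∧ t < ‖sg a (flipGE k σ)‖) := by
    intro σ hσ
    by_contra hcon
    push_neg at hcon
    have h1 : ‖sg a σ‖ ≤ t := hcon.1 hσ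
    have h2 : ‖sg a (flipGE k σ)‖ ≤ t := hcon.2 hσ
    have hsum : sg a σ + sg a (flipGE k σ) = (2:ℝ) • spart a k σ := by
      rw [sg_flipGE, ← spart_add_ttail a k σ, two_smul]; abel
    have : (2:ℝ) * ‖spart a k σ‖ ≤ 2 * t := by
      calc (2:ℝ) * ‖spart a k σ‖ = ‖(2:ℝ) • spart a k σ‖ := by
            rw [norm_smul]; simp
        _ = ‖sg a σ + sg a (flipGE k σ)‖ := by rw [hsum]
        _ ≤ ‖sg a σ‖ + ‖sg a (flipGE k σ)‖ := norm_add_le _ _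
        _ ≤ 2 * t := by linarith
    have := hσ.1
    linarith
  calc cnt (hitAt a t k)
      ≤ cnt (fun σ => hitAt a t k σ ∧ t < ‖sg a σ‖)
        + cnt (fun σ => hitAt a t k σ ∧ t < ‖sg a (flipGE k σ)‖) := cnt_le_add key
    _ = 2 * cnt (fun σ => hitAt a t k σ ∧ t < ‖sg a σ‖) := by
        have : cnt (fun σ => hitAt a t k σ ∧ t < ‖sg a (flipGE k σ)‖)
            = cnt (fun σ => hitAt a t k σ ∧ t < ‖sg a σ‖) := by
          rw [← cnt_comp (P := fun σ => hitAt a t k σ ∧ t < ‖sg a σ‖) (flipGE k) (flipGE_inv k)]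
          apply cnt_congr
          intro σ
          constructor
          · rintro ⟨h1, h2⟩
            exact ⟨(hitAt_depLT a t k σ (flipGE k σ)
              (fun n hn => by simp [flipGE, hn])).1 h1, h2⟩
          · rintro ⟨h1, h2⟩
            exact ⟨(hitAt_depLT a t k σ (flipGE k σ)
              (fun n hn => by simp [flipGE, hn])).2 h1, h2⟩
        omega
  
lemma levy_tail (a : Fin N → B) (t : ℝ) (k : ℕ) :
    cnt (fun σ => t < ‖ttail a k σ‖) ≤ 2 * cnt (fun σ => t < ‖sg a σ‖) := by
  have key : ∀ σ, t < ‖ttail a k σ‖ →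
      (t < ‖ttail a k σ‖ ∧ t < ‖sg a σ‖) ∨ (t < ‖ttail a k σ‖ ∧ t < ‖sg a (flipLT k σ)‖) := by
    intro σ hσ
    by_contra hcon
    push_neg at hcon
    have h1 : ‖sg a σ‖ ≤ t := hcon.1 hσ
    have h2 : ‖sg a (flipLT k σ)‖ ≤ t := hcon.2 hσ
    have hsum : sg a σ + sg a (flipLT k σ) = (2:ℝ) • ttail a k σ := by
      rw [sg_flipLT, ← spart_add_ttail a k σ, two_smul]; abel
    have : (2:ℝ) * ‖ttail a k σ‖ ≤ 2 * t := by
      calc (2:ℝ) * ‖ttail a k σ‖ = ‖(2:ℝ) • ttail a k σ‖ := by rw [norm_smul]; simp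
        _ = ‖sg a σ + sg a (flipLT k σ)‖ := by rw [hsum]
        _ ≤ ‖sg a σ‖ + ‖sg a (flipLT k σ)‖ := norm_add_le _ _
        _ ≤ 2 * t := by linarith
    linarith
  calc cnt (fun σ => t < ‖ttail a k σ‖)
      ≤ cnt (fun σ => t < ‖ttail a k σ‖ ∧ t < ‖sg a σ‖)
        + cnt (fun σ => t < ‖ttail a k σ‖ ∧ t < ‖sg a (flipLT k σ)‖) := cnt_le_add key
    _ ≤ cnt (fun σ => t < ‖sg a σ‖) + cnt (fun σ => t < ‖sg a σ‖) := by
        apply Nat.add_le_add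
        · exact cnt_mono (fun σ h => h.2)
        · have : cnt (fun σ => t < ‖ttail a k σ‖ ∧ t < ‖sg a (flipLT k σ)‖)
              = cnt (fun σ => t < ‖ttail a k σ‖ ∧ t < ‖sg a σ‖) := by
            rw [← cnt_comp (P := fun σ => t < ‖ttail a k σ‖ ∧ t < ‖sg a σ‖)
              (flipLT k) (flipLT_inv k)]
            apply cnt_congr
            intro σ
            rw [ttail_flipLT]
          rw [this]
          exact cnt_mono (fun σ h => h.2)
    _ = 2 * cnt (fun σ => t < ‖sg a σ‖) := by omega

lemma sum_hit_le (a : Fin N → B) (t : ℝ) (m : ℕ) :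
    ∑ k ∈ Finset.range m, cnt (hitAt a t k) ≤ 2 * cnt (fun σ => t < ‖sg a σ‖) := by
  calc ∑ k ∈ Finset.range m, cnt (hitAt a t k)
      ≤ ∑ k ∈ Finset.range m, 2 * cnt (fun σ => hitAt a t k σ ∧ t < ‖sg a σ‖) :=
        Finset.sum_le_sum (fun k _ => levy_hit a t k)
    _ = 2 * ∑ k ∈ Finset.range m, cnt (fun σ => hitAt a t k σ ∧ t < ‖sg a σ‖) := by
        rw [Finset.mul_sum]
    _ ≤ 2 * cnt (fun σ => t < ‖sg a σ‖) := by
        exact Nat.mul_le_mul_left 2 (sum_cnt_le (hitAt_disj a t))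

lemma hj_count (a : Fin N → B) (t s : ℝ) (ht : 0 < t) (hs : 0 ≤ s)
    (hsa : ∀ n, ‖a n‖ ≤ s) :
    cnt (fun σ => 2*t + s < ‖sg a σ‖) * 2 ^ N
      ≤ 4 * (cnt (fun σ => t < ‖sg a σ‖) * cnt (fun σ => t < ‖sg a σ‖)) := by
  have cover : ∀ σ, 2*t + s < ‖sg a σ‖ →
      ∃ k ∈ Finset.range (N+1), hitAt a t k σ ∧ t < ‖ttail a k σ‖ := by
    intro σ hσ
    have hex : ∃ k, t < ‖spart a k σ‖ := ⟨N, by rw [spart_of_ge a le_rfl]; linarith⟩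
    obtain ⟨m, hem⟩ : ∃ m, Nat.find hex = m + 1 := by
      have hk0 : Nat.find hex ≠ 0 := by
        intro h0
        have hsp := Nat.find_spec hex
        rw [h0, spart_zero] at hsp
        simp at hsp
        linarith
      exact ⟨Nat.find hex - 1, (Nat.succ_pred_eq_of_pos (Nat.pos_of_ne_zero hk0)).symm⟩
    have hspec : t < ‖spart a (m+1) σ‖ := by rw [← hem]; exact Nat.find_spec hex
    have hmin : ∀ j < m + 1, ‖spart a j σ‖ ≤ t := by
      intro j hj
      exact not_lt.1 (Nat.find_min hex (by rw [hem]; exact hj))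
    have hkN : m + 1 ≤ N := by
      rw [← hem]
      exact Nat.find_le (by rw [spart_of_ge a le_rfl]; linarith)
    have hmN : m < N := by omega
    refine ⟨m + 1, by simp [Nat.lt_succ_iff]; omega, ⟨hspec, hmin⟩, ?_⟩
    have hsp_bound : ‖spart a (m+1) σ‖ ≤ t + s := by
      rw [spart_succ a m hmN]
      calc ‖spart a m σ + eps (σ ⟨m, hmN⟩) • a ⟨m, hmN⟩‖
          ≤ ‖spart a m σ‖ + ‖eps (σ ⟨m, hmN⟩) • a ⟨m, hmN⟩‖ := norm_add_le _ _
        _ ≤ t + s := by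
            rw [norm_eps_smul]
            exact add_le_add (hmin m (Nat.lt_succ_self m)) (hsa _)
    have httail : ttail a (m+1) σ = sg a σ - spart a (m+1) σ := by
      rw [← spart_add_ttail a (m+1) σ]; abel
    calc t = (2*t + s) - (t + s) := by ring
      _ < ‖sg a σ‖ - ‖spart a (m+1) σ‖ := by linarith
      _ ≤ ‖sg a σ - spart a (m+1) σ‖ := by
          have := norm_sub_norm_le (sg a σ) (spart a (m+1) σ)
          linarith
      _ = ‖ttail a (m+1) σ‖ := by rw [httail]
  calc cnt (fun σ => 2*t + s < ‖sg a σ‖) * 2 ^ N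
      ≤ (∑ k ∈ Finset.range (N+1), cnt (fun σ => hitAt a t k σ ∧ t < ‖ttail a k σ‖)) * 2 ^ N :=
        Nat.mul_le_mul_right _ (cnt_le_sum cover)
    _ = ∑ k ∈ Finset.range (N+1), cnt (fun σ => hitAt a t k σ ∧ t < ‖ttail a k σ‖) * 2 ^ N := by
        rw [Finset.sum_mul]
    _ = ∑ k ∈ Finset.range (N+1), cnt (hitAt a t k) * cnt (fun σ => t < ‖ttail a k σ‖) := by
        apply Finset.sum_congr rfl
        intro k _
        exact cnt_mul_cnt (hitAt_depLT a t k) (ttail_depGE a t k)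
    _ ≤ ∑ k ∈ Finset.range (N+1), cnt (hitAt a t k) * (2 * cnt (fun σ => t < ‖sg a σ‖)) :=
        Finset.sum_le_sum (fun k _ => Nat.mul_le_mul_left _ (levy_tail a t k))
    _ = (∑ k ∈ Finset.range (N+1), cnt (hitAt a t k)) * (2 * cnt (fun σ => t < ‖sg a σ‖)) := by
        rw [Finset.sum_mul]
    _ ≤ (2 * cnt (fun σ => t < ‖sg a σ‖)) * (2 * cnt (fun σ => t < ‖sg a σ‖)) :=
        Nat.mul_le_mul_right _ (sum_hit_le a t (N+1))
    _ = 4 * (cnt (fun σ => t < ‖sg a σ‖) * cnt (fun σ => t < ‖sg a σ‖)) := by ring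

end levy

section analysis
open Real

lemma nat_quad : ∀ k : ℕ, (k+1)^2 ≤ 2^k + 9 := by
  have sq_le : ∀ k : ℕ, 6 ≤ k → (k+1)^2 ≤ 2^k := by
    intro k hk
    induction k with
    | zero => omega
    | succ n ih =>
      rcases Nat.lt_or_ge n 6 with h | h
      · interval_cases n <;> first | omega | norm_num
      · have h1 := ih h
        have h2 : (n+2)^2 ≤ 2*(n+1)^2 := by nlinarith
        calc (n+2)^2 ≤ 2*(n+1)^2 := h2
          _ ≤ 2*2^n := by omega
          _ = 2^(n+1) := by ring
  intro k
  rcases Nat.lt_or_ge k 6 with h | h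
  · interval_cases k <;> norm_num
  · exact le_trans (sq_le k h) (Nat.le_add_right _ _)

noncomputable def pr {N : ℕ} (P : (Fin N → Bool) → Prop) : ℝ := (1/2:ℝ)^N * (cnt P : ℝ)

lemma pr_def {N : ℕ} (P : (Fin N → Bool) → Prop) : pr P = (1/2:ℝ)^N * (cnt P : ℝ) := rfl

lemma pr_nonneg {N : ℕ} (P : (Fin N → Bool) → Prop) : 0 ≤ pr P := by
  rw [pr_def]; positivity

variable {B : Type*} [NormedAddCommGroup B] [NormedSpace ℝ B] {N : ℕ}

lemma pr_hj (a : Fin N → B) (t s : ℝ) (ht : 0 < t) (hs : 0 ≤ s) (hsa : ∀ n, ‖a n‖ ≤ s) :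
    pr (fun σ => 2*t + s < ‖sg a σ‖) ≤ 4 * pr (fun σ => t < ‖sg a σ‖)^2 := by
  have hcast : (cnt (fun σ => 2*t + s < ‖sg a σ‖) : ℝ) * 2^N
      ≤ 4 * ((cnt (fun σ => t < ‖sg a σ‖) : ℝ) * (cnt (fun σ => t < ‖sg a σ‖) : ℝ)) := by
    exact_mod_cast hj_count a t s ht hs hsa
  have hx : (0:ℝ) < 2^N := by positivity
  have h12 : (1/2:ℝ)^N = ((2:ℝ)^N)⁻¹ := by rw [one_div, inv_pow]
  rw [pr_def, pr_def, h12]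
  set x : ℝ := ((2:ℝ)^N)⁻¹ with hxdef
  have hxmul : x * (2:ℝ)^N = 1 := by rw [hxdef]; field_simp
  have hxx : x * x * (2:ℝ)^N = x := by rw [mul_assoc, hxmul, mul_one]
  set c1 : ℝ := (cnt (fun σ => 2*t + s < ‖sg a σ‖) : ℝ) with hc1
  set c2 : ℝ := (cnt (fun σ => t < ‖sg a σ‖) : ℝ) with hc2
  have hxpos : 0 < x := by rw [hxdef]; positivity
  calc x * c1 = (x * x * (2:ℝ)^N) * c1 := by rw [hxx]
    _ = (x * x) * (c1 * (2:ℝ)^N) := by ring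
    _ ≤ (x * x) * (4 * (c2 * c2)) := by
        apply mul_le_mul_of_nonneg_left hcast (by positivity)
    _ = 4 * (x * c2)^2 := by ring

theorem core (p q : ℝ) (hp : 0 < p) (hq : 0 < q) :
    ∃ M : ℝ, 0 < M ∧ ∀ {B : Type*} [NormedAddCommGroup B] [NormedSpace ℝ B] {N : ℕ}
      (a : Fin N → B),
      (1/2:ℝ)^N * (∑ σ : Fin N → Bool, ‖sg a σ‖ ^ p) ≤ 1 →
      (1/2:ℝ)^N * (∑ σ : Fin N → Bool, ‖sg a σ‖ ^ q) ≤ M := by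
  classical
  set s0 : ℝ := (2:ℝ)^(1/p) with hs0def
  set t0 : ℝ := (8:ℝ)^(1/p) with ht0def
  set cc : ℝ := t0 + s0 with hccdef
  have hs0pos : 0 < s0 := Real.rpow_pos_of_pos (by norm_num) _
  have ht0one : 1 ≤ t0 := Real.one_le_rpow (by norm_num) (by positivity)
  have ht0pos : 0 < t0 := lt_of_lt_of_le one_pos ht0one
  have hccpos : 0 < cc := by positivity
  set A : ℝ := cc^q * (2:ℝ)^((q+1)^2 + 9) with hAdef
  have hApos : 0 < A := by
    apply mul_pos (Real.rpow_pos_of_pos hccpos _) (Real.rpow_pos_of_pos (by norm_num) _)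
  set M : ℝ := t0^q + A * 2 with hMdef
  have hMpos : 0 < M := by
    have := Real.rpow_pos_of_pos ht0pos q
    nlinarith
  refine ⟨M, hMpos, ?_⟩
  intro B _ _ N a h1
  -- the T sequence
  set T : ℕ → ℝ := fun k => 2^k * cc - s0 with hTdef
  have hT0 : T 0 = t0 := by simp [hTdef, hccdef]
  have hTsucc : ∀ k, T (k+1) = 2 * T k + s0 := by
    intro k; simp only [hTdef]; rw [pow_succ]; ring
  have hTge : ∀ k, (2:ℝ)^k ≤ T k := by
    intro k
    induction k with
    | zero => simpa [hT0] using ht0one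
    | succ n ih =>
      rw [hTsucc n, pow_succ]
      nlinarith
  have hTpos : ∀ k, 0 < T k := fun k => lt_of_lt_of_le (by positivity) (hTge k)
  have hTle : ∀ k, T k ≤ 2^k * cc := by
    intro k; simp only [hTdef]; linarith
  -- basic sums
  have hone : (1/2:ℝ)^N * 2^N = 1 := by
    rw [← mul_pow]; norm_num
  have hsum_p_le : ∑ σ : Fin N → Bool, ‖sg a σ‖ ^ p ≤ 2^N := by
    have h2 := mul_le_mul_of_nonneg_right h1 (le_of_lt (show (0:ℝ) < 2^N by positivity))
    rw [one_mul] at h2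
    calc ∑ σ : Fin N → Bool, ‖sg a σ‖ ^ p
        = ((1/2:ℝ)^N * ∑ σ : Fin N → Bool, ‖sg a σ‖ ^ p) * 2^N := by
          rw [mul_comm ((1/2:ℝ)^N) _, mul_assoc, hone, mul_one]
      _ ≤ 2^N := h2
  -- Chebyshev
  have cheb : ∀ t : ℝ, 0 < t → t ^ p * pr (fun σ => t < ‖sg a σ‖) ≤ 1 := by
    intro t ht
    have hle : ∑ σ : Fin N → Bool, (if t < ‖sg a σ‖ then t ^ p else 0)
        ≤ ∑ σ : Fin N → Bool, ‖sg a σ‖ ^ p := by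
      apply Finset.sum_le_sum
      intro σ _
      by_cases h : t < ‖sg a σ‖
      · rw [if_pos h]; exact Real.rpow_le_rpow ht.le h.le hp.le
      · rw [if_neg h]; exact Real.rpow_nonneg (norm_nonneg _) _
    have hsum := sum_ite_cnt (fun σ => t < ‖sg a σ‖) (t ^ p)
    calc t ^ p * pr (fun σ => t < ‖sg a σ‖)
        = (1/2:ℝ)^N * ((cnt (fun σ => t < ‖sg a σ‖) : ℝ) * t ^ p) := by rw [pr_def]; ring
      _ = (1/2:ℝ)^N * ∑ σ : Fin N → Bool, (if t < ‖sg a σ‖ then t ^ p else 0) := by rw [hsum]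
      _ ≤ (1/2:ℝ)^N * ∑ σ : Fin N → Bool, ‖sg a σ‖ ^ p := by
          apply mul_le_mul_of_nonneg_left hle (by positivity)
      _ ≤ 1 := h1
  -- bound on the coefficients
  have hanorm : ∀ n : Fin N, ‖a n‖ ≤ s0 := by
    intro n
    have hpt : ∀ σ : Fin N → Bool, ‖a n‖ ^ p ≤ ‖sg a σ‖^p + ‖sg a (flipOne n σ)‖^p := by
      intro σ
      have hdiff := sg_flipOne a n σ
      have hnrm2 : ‖(2 * eps (σ n) : ℝ)‖ = 2 := by cases σ n <;> norm_num [eps]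
      have h2an : 2 * ‖a n‖ ≤ ‖sg a σ‖ + ‖sg a (flipOne n σ)‖ := by
        calc 2 * ‖a n‖ = ‖(2 * eps (σ n)) • a n‖ := by rw [norm_smul, hnrm2]
          _ = ‖sg a σ - sg a (flipOne n σ)‖ := by rw [hdiff]
          _ ≤ ‖sg a σ‖ + ‖sg a (flipOne n σ)‖ := norm_sub_le _ _
      rcases le_total ‖sg a σ‖ ‖sg a (flipOne n σ)‖ with h | h
      · have hle2 : ‖a n‖ ≤ ‖sg a (flipOne n σ)‖ := by linarith
        have h3 : ‖a n‖^p ≤ ‖sg a (flipOne n σ)‖^p :=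
          Real.rpow_le_rpow (norm_nonneg _) hle2 hp.le
        have h4 : (0:ℝ) ≤ ‖sg a σ‖^p := Real.rpow_nonneg (norm_nonneg _) _
        linarith
      · have hle2 : ‖a n‖ ≤ ‖sg a σ‖ := by linarith
        have h3 : ‖a n‖^p ≤ ‖sg a σ‖^p := Real.rpow_le_rpow (norm_nonneg _) hle2 hp.le
        have h4 : (0:ℝ) ≤ ‖sg a (flipOne n σ)‖^p := Real.rpow_nonneg (norm_nonneg _) _
        linarith
    have hsum2 : (2:ℝ)^N * ‖a n‖ ^ p ≤ 2 * ∑ σ : Fin N → Bool, ‖sg a σ‖^p := by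
      have hs := Finset.sum_le_sum (fun σ (_ : σ ∈ Finset.univ) => hpt σ)
      rw [Finset.sum_add_distrib] at hs
      have hre : ∑ σ : Fin N → Bool, ‖sg a (flipOne n σ)‖^p
          = ∑ σ : Fin N → Bool, ‖sg a σ‖^p :=
        Function.Bijective.sum_comp (Function.Involutive.bijective (flipOne_inv n))
          (fun σ => ‖sg a σ‖^p)
      rw [hre] at hs
      have hconst : ∑ _σ : Fin N → Bool, ‖a n‖^p = (2:ℝ)^N * ‖a n‖^p := by
        rw [Finset.sum_const, Finset.card_univ, nsmul_eq_mul]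
        congr 1
        push_cast [Fintype.card_fun]
        simp
      rw [hconst] at hs
      linarith
    have h2 : ‖a n‖^p ≤ 2 := by
      have h2N : (0:ℝ) < 2^N := by positivity
      nlinarith [hsum_p_le, hsum2]
    calc ‖a n‖ = (‖a n‖^p)^(1/p) := by
          rw [one_div, Real.rpow_rpow_inv (norm_nonneg _) (ne_of_gt hp)]
      _ ≤ (2:ℝ)^(1/p) := Real.rpow_le_rpow (Real.rpow_nonneg (norm_nonneg _) _) h2 (by positivity)
  -- tail bounds
  have tail : ∀ k, pr (fun σ => T k < ‖sg a σ‖) ≤ (1/2:ℝ)^(2^k) * (1/4) := by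
    intro k
    induction k with
    | zero =>
      simp only [hT0]
      have h8 : t0 ^ p = 8 := by
        rw [ht0def, one_div, Real.rpow_inv_rpow (by norm_num) (ne_of_gt hp)]
      have hc := cheb t0 ht0pos
      rw [h8] at hc
      have := pr_nonneg (N := N) (fun σ => t0 < ‖sg a σ‖)
      norm_num
      linarith
    | succ k ih =>
      have hdbl := pr_hj a (T k) s0 (hTpos k) hs0pos.le hanorm
      rw [← hTsucc k] at hdbl
      calc pr (fun σ => T (k+1) < ‖sg a σ‖)
          ≤ 4 * pr (fun σ => T k < ‖sg a σ‖)^2 := hdbl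
        _ ≤ 4 * ((1/2:ℝ)^(2^k) * (1/4))^2 := by
            have := pow_le_pow_left₀ (pr_nonneg _) ih 2
            linarith
        _ = (1/2:ℝ)^(2^(k+1)) * (1/4) := by
            rw [mul_pow, ← pow_mul, ← pow_succ]
            ring
  -- pointwise dyadic bound
  have ptwise : ∀ (K : ℕ) (x : ℝ), 0 ≤ x → x ≤ T K →
      x ^ q ≤ t0 ^ q + ∑ k ∈ Finset.range K, (if T k < x then T (k+1) ^ q else 0) := by
    intro K
    induction K with
    | zero =>
      intro x hx0 hxT
      rw [hT0] at hxT
      simp only [Finset.range_zero, Finset.sum_empty, add_zero]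
      exact Real.rpow_le_rpow hx0 hxT hq.le
    | succ K ih =>
      intro x hx0 hxT
      by_cases hcase : x ≤ T K
      · have hih := ih x hx0 hcase
        have hterm : (0:ℝ) ≤ if T K < x then T (K+1) ^ q else 0 := by
          split
          · exact Real.rpow_nonneg (hTpos _).le _
          · exact le_refl 0
        rw [Finset.sum_range_succ]
        linarith
      · push_neg at hcase
        rw [Finset.sum_range_succ, if_pos hcase]
        have hx : x ^ q ≤ T (K+1) ^ q := Real.rpow_le_rpow hx0 hxT hq.le
        have h0 : (0:ℝ) ≤ t0^q := Real.rpow_nonneg ht0pos.le _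
        have hsum0 : (0:ℝ) ≤ ∑ k ∈ Finset.range K, (if T k < x then T (k+1) ^ q else 0) := by
          apply Finset.sum_nonneg
          intro k _
          split
          · exact Real.rpow_nonneg (hTpos _).le _
          · exact le_refl 0
        linarith
  -- uniform cutoff
  obtain ⟨K, hK⟩ : ∃ K : ℕ, ∀ σ : Fin N → Bool, ‖sg a σ‖ ≤ T K := by
    obtain ⟨K, hK⟩ := pow_unbounded_of_one_lt (R := ℝ) (∑ n : Fin N, ‖a n‖) one_lt_two
    refine ⟨K, fun σ => ?_⟩
    calc ‖sg a σ‖ ≤ ∑ n : Fin N, ‖eps (σ n) • a n‖ := norm_sum_le _ _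
      _ = ∑ n : Fin N, ‖a n‖ := by
          apply Finset.sum_congr rfl
          intro n _
          exact norm_eps_smul _ _
      _ ≤ 2^K := hK.le
      _ ≤ T K := hTge K
  -- per-term bound
  have termb : ∀ k : ℕ, pr (fun σ => T k < ‖sg a σ‖) * T (k+1)^q ≤ A * (1/2)^k := by
    intro k
    have hstep1 : pr (fun σ => T k < ‖sg a σ‖) * T (k+1)^q
        ≤ ((1/2:ℝ)^(2^k)) * ((2^(k+1) * cc)^q) := by
      apply mul_le_mul
      · calc pr (fun σ => T k < ‖sg a σ‖) ≤ (1/2:ℝ)^(2^k) * (1/4) := tail k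
          _ ≤ (1/2:ℝ)^(2^k) := by
              have : (0:ℝ) ≤ (1/2:ℝ)^(2^k) := by positivity
              linarith
      · exact Real.rpow_le_rpow (hTpos _).le (hTle (k+1)) hq.le
      · exact Real.rpow_nonneg (hTpos _).le _
      · positivity
    have hstep2 : ((1/2:ℝ)^(2^k)) * ((2^(k+1) * cc)^q) ≤ A * (1/2)^k := by
      have hhalf : ∀ m : ℕ, ((1/2:ℝ))^m = (2:ℝ)^(-(m:ℝ)) := by
        intro m
        rw [Real.rpow_neg (by norm_num), Real.rpow_natCast, one_div, inv_pow]
      have hsplit : ((2:ℝ)^(k+1) * cc)^q = (2:ℝ)^(((k+1):ℝ) * q) * cc^q := by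
        rw [Real.mul_rpow (by positivity) hccpos.le]
        congr 1
        rw [← Real.rpow_natCast 2 (k+1), ← Real.rpow_mul (by norm_num)]
        push_cast
        ring_nf
      rw [hhalf (2^k), hhalf k, hsplit, hAdef]
      have hgoal : (2:ℝ)^(-(((2:ℕ)^k : ℕ):ℝ)) * ((2:ℝ)^(((k+1):ℝ) * q) * cc^q)
          = cc^q * ((2:ℝ)^(-(((2:ℕ)^k : ℕ):ℝ) + ((k+1):ℝ) * q)) := by
        rw [Real.rpow_add (by norm_num)]
        ring
      rw [hgoal]
      have hexp : (-(((2:ℕ)^k : ℕ):ℝ) + ((k+1):ℝ) * q) ≤ ((q+1)^2 + 9) + (-(k:ℝ)) := by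
        have hn : ((k:ℝ)+1)^2 ≤ (2:ℝ)^k + 9 := by exact_mod_cast nat_quad k
        have hk0 : (0:ℝ) ≤ (k:ℝ) := Nat.cast_nonneg k
        push_cast
        nlinarith [hn, sq_nonneg (q - (k:ℝ)), mul_nonneg hq.le hk0]
      have hmono : (2:ℝ)^(-(((2:ℕ)^k : ℕ):ℝ) + ((k+1):ℝ) * q)
          ≤ (2:ℝ)^(((q+1)^2 + 9) + (-(k:ℝ))) := by
        exact (Real.rpow_le_rpow_left_iff (by norm_num)).2 hexp
      calc cc^q * ((2:ℝ)^(-(((2:ℕ)^k : ℕ):ℝ) + ((k+1):ℝ) * q))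
          ≤ cc^q * ((2:ℝ)^(((q+1)^2 + 9) + (-(k:ℝ)))) := by
            apply mul_le_mul_of_nonneg_left hmono (Real.rpow_nonneg hccpos.le _)
        _ = cc^q * (2:ℝ)^((q+1)^2 + 9) * (2:ℝ)^(-(k:ℝ)) := by
            rw [Real.rpow_add (by norm_num)]
            ring
    exact le_trans hstep1 hstep2
  -- main chain
  have hcardeq : ((Finset.univ : Finset (Fin N → Bool)).card : ℝ) = 2^N := by
    rw [Finset.card_univ]
    push_cast [Fintype.card_fun]
    simp
  calc (1/2:ℝ)^N * ∑ σ : Fin N → Bool, ‖sg a σ‖^q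
      ≤ (1/2:ℝ)^N * ∑ σ : Fin N → Bool,
          (t0^q + ∑ k ∈ Finset.range K, (if T k < ‖sg a σ‖ then T (k+1) ^ q else 0)) := by
        apply mul_le_mul_of_nonneg_left
          (Finset.sum_le_sum fun σ _ => ptwise K _ (norm_nonneg _) (hK σ)) (by positivity)
    _ = t0^q + ∑ k ∈ Finset.range K, pr (fun σ => T k < ‖sg a σ‖) * T (k+1)^q := by
        rw [Finset.sum_add_distrib, mul_add]
        congr 1
        · rw [Finset.sum_const, Finset.card_univ, nsmul_eq_mul]
          rw [show ((Fintype.card (Fin N → Bool)) : ℝ) = 2^N by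
            rw [Fintype.card_fun, Fintype.card_bool, Fintype.card_fin]; push_cast; ring]
          rw [← mul_assoc, hone, one_mul]
        · rw [Finset.sum_comm, Finset.mul_sum]
          apply Finset.sum_congr rfl
          intro k _
          rw [sum_ite_cnt (fun σ => T k < ‖sg a σ‖) (T (k+1)^q), pr_def]
          ring
    _ ≤ t0^q + ∑ k ∈ Finset.range K, A * (1/2)^k := by
        have := Finset.sum_le_sum (fun k (_ : k ∈ Finset.range K) => termb k)
        linarith
    _ ≤ t0^q + A * 2 := by
        have hgeo : ∑ k ∈ Finset.range K, (1/(2:ℝ))^k ≤ 2 := sum_geometric_two_le K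
        have : ∑ k ∈ Finset.range K, A * (1/2:ℝ)^k = A * ∑ k ∈ Finset.range K, (1/(2:ℝ))^k := by
          rw [Finset.mul_sum]
        rw [this]
        have := mul_le_mul_of_nonneg_left hgeo hApos.le
        linarith
    _ = M := hMdef.symm

theorem discrete (p q : ℝ) (hp : 0 < p) (hpq : p < q) :
    ∃ K : ℝ, 0 < K ∧ ∀ {B : Type*} [NormedAddCommGroup B] [NormedSpace ℝ B] {N : ℕ}
      (a : Fin N → B),
      ((1/2:ℝ)^N * ∑ σ : Fin N → Bool, ‖sg a σ‖ ^ q) ^ (1/q)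
        ≤ K * ((1/2:ℝ)^N * ∑ σ : Fin N → Bool, ‖sg a σ‖ ^ p) ^ (1/p) := by
  have hq : 0 < q := hp.trans hpq
  obtain ⟨M, hM, hcore⟩ := core p q hp hq
  refine ⟨M ^ (1/q), Real.rpow_pos_of_pos hM _, ?_⟩
  intro B _ _ N a
  set Sp : ℝ := (1/2:ℝ)^N * ∑ σ : Fin N → Bool, ‖sg a σ‖ ^ p with hSpdef
  set Sq : ℝ := (1/2:ℝ)^N * ∑ σ : Fin N → Bool, ‖sg a σ‖ ^ q with hSqdef
  have hSp0 : 0 ≤ Sp := by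
    rw [hSpdef]
    apply mul_nonneg (by positivity)
    exact Finset.sum_nonneg (fun σ _ => Real.rpow_nonneg (norm_nonneg _) _)
  rcases eq_or_lt_of_le hSp0 with h0 | hpos
  · -- degenerate case : all sums vanish
    have hz : ∀ σ : Fin N → Bool, ‖sg a σ‖ = 0 := by
      intro σ
      have hne : ((1/2:ℝ)^N) ≠ 0 := by positivity
      have hsum0 : ∑ σ : Fin N → Bool, ‖sg a σ‖^p = 0 := by
        have := h0.symm
        rw [hSpdef] at this
        exact (mul_eq_zero.1 this).resolve_left hne
      have hterm := (Finset.sum_eq_zero_iff_of_nonneg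
        (fun σ _ => Real.rpow_nonneg (norm_nonneg _) p)).1 hsum0 σ (Finset.mem_univ σ)
      by_contra hne2
      have hposn : 0 < ‖sg a σ‖ := lt_of_le_of_ne (norm_nonneg _) (Ne.symm hne2)
      exact absurd hterm (ne_of_gt (Real.rpow_pos_of_pos hposn p))
    have hqz : Sq = 0 := by
      rw [hSqdef]
      rw [Finset.sum_eq_zero (fun σ _ => by rw [hz σ]; exact Real.zero_rpow (ne_of_gt hq))]
      ring
    rw [hqz, Real.zero_rpow (by positivity : (1:ℝ)/q ≠ 0)]
    apply mul_nonneg (Real.rpow_nonneg hM.le _) (Real.rpow_nonneg hSp0 _)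
  · -- scaling case
    set lam : ℝ := Sp ^ (1/p) with hlamdef
    have hlam0 : 0 < lam := Real.rpow_pos_of_pos hpos _
    have hlamp : lam ^ p = Sp := by
      rw [hlamdef, one_div, Real.rpow_inv_rpow hSp0 (ne_of_gt hp)]
    set b : Fin N → B := fun n => lam⁻¹ • a n with hbdef
    have hsgb : ∀ σ, sg b σ = lam⁻¹ • sg a σ := by
      intro σ
      unfold sg
      rw [Finset.smul_sum]
      apply Finset.sum_congr rfl
      intro n _
      rw [hbdef, smul_comm]
    have hnormb : ∀ (σ : Fin N → Bool) (e : ℝ), ‖sg b σ‖ ^ e = (lam⁻¹)^e * ‖sg a σ‖^e := by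
      intro σ e
      rw [hsgb, norm_smul, Real.mul_rpow (norm_nonneg _) (norm_nonneg _)]
      congr 2
      exact Real.norm_of_nonneg (inv_nonneg.2 hlam0.le)
    have hsumb : ∀ e : ℝ, (1/2:ℝ)^N * ∑ σ : Fin N → Bool, ‖sg b σ‖ ^ e
        = (lam⁻¹)^e * ((1/2:ℝ)^N * ∑ σ : Fin N → Bool, ‖sg a σ‖ ^ e) := by
      intro e
      rw [Finset.sum_congr rfl (fun σ _ => hnormb σ e), ← Finset.mul_sum]
      ring
    have hb1 : (1/2:ℝ)^N * ∑ σ : Fin N → Bool, ‖sg b σ‖ ^ p ≤ 1 := by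
      rw [hsumb p, ← hSpdef, Real.inv_rpow hlam0.le, hlamp]
      rw [inv_mul_cancel₀ (ne_of_gt hpos)]
    have hbq := hcore b hb1
    rw [hsumb q, ← hSqdef, Real.inv_rpow hlam0.le] at hbq
    -- hbq : (lam^q)⁻¹ * Sq ≤ M
    have hlamq : 0 < lam ^ q := Real.rpow_pos_of_pos hlam0 _
    have hSqle : Sq ≤ M * lam ^ q := by
      have := mul_le_mul_of_nonneg_right hbq hlamq.le
      rw [mul_comm ((lam^q)⁻¹) Sq, mul_assoc, inv_mul_cancel₀ (ne_of_gt hlamq), mul_one] at this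
      exact this
    have hSq0 : 0 ≤ Sq := by
      rw [hSqdef]
      apply mul_nonneg (by positivity)
      exact Finset.sum_nonneg (fun σ _ => Real.rpow_nonneg (norm_nonneg _) _)
    calc Sq ^ (1/q) ≤ (M * lam ^ q) ^ (1/q) :=
          Real.rpow_le_rpow hSq0 hSqle (by positivity)
      _ = M ^ (1/q) * lam := by
          rw [Real.mul_rpow hM.le hlamq.le]
          congr 1
          rw [one_div]
          exact Real.rpow_rpow_inv hlam0.le (ne_of_gt hq)
      _ = M ^ (1/q) * Sp ^ (1/p) := rfl

end analysis

section conv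
open MeasureTheory

theorem integral_eq_avg {B : Type*} [NormedAddCommGroup B] [NormedSpace ℝ B]
    (N : ℕ) (a : Fin N → B) {Ω : Type*} [MeasurableSpace Ω] (P : Measure Ω)
    [IsProbabilityMeasure P] (r : ℕ → Ω → ℝ) (hmeas : ∀ n, Measurable (r n))
    (hind : ProbabilityTheory.iIndepFun (m := fun _ => inferInstance) r P)
    (hval : ∀ n, P {ω | r n ω = 1} = 1/2 ∧ P {ω | r n ω = -1} = 1/2) (e : ℝ) :
    ∫ ω, ‖∑ n : Fin N, r n.val ω • a n‖ ^ e ∂P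
      = (1/2:ℝ)^N * ∑ σ : Fin N → Bool, ‖sg a σ‖ ^ e := by
  classical
  set A : (Fin N → Bool) → Set Ω := fun σ => {ω | ∀ n : Fin N, r n.val ω = eps (σ n)}
    with hAdef
  have hAmeas : ∀ σ, MeasurableSet (A σ) := by
    intro σ
    have hiA : A σ = ⋂ n : Fin N, (r n.val) ⁻¹' {eps (σ n)} := by
      ext ω; simp [hAdef, Set.mem_iInter, Set.mem_preimage]
    rw [hiA]
    exact MeasurableSet.iInter (fun n => (hmeas n.val) (measurableSet_singleton _))
  have hval' : ∀ (n : ℕ) (c : ℝ), (c = 1 ∨ c = -1) → P (r n ⁻¹' {c}) = 1/2 := by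
    intro n c hc
    have hpre : r n ⁻¹' {c} = {ω | r n ω = c} := by ext ω; simp [Set.mem_preimage]
    rcases hc with rfl | rfl
    · rw [hpre]; exact (hval n).1
    · rw [hpre]; exact (hval n).2
  have hPA : ∀ σ, P (A σ) = (1/2 : ENNReal)^N := by
    intro σ
    set sets : ℕ → Set ℝ := fun i => if h : i < N then {eps (σ ⟨i, h⟩)} else Set.univ
      with hsets
    have hrw : A σ = ⋂ i ∈ Finset.range N, r i ⁻¹' sets i := by
      ext ω
      simp only [hAdef, Set.mem_setOf_eq, Set.mem_iInter, Set.mem_preimage, Finset.mem_range]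
      constructor
      · intro h i hi
        rw [hsets]
        simp only [dif_pos hi, Set.mem_singleton_iff]
        exact h ⟨i, hi⟩
      · intro h n
        have hn := h n.val n.isLt
        rw [hsets] at hn
        simp only [dif_pos n.isLt, Set.mem_singleton_iff] at hn
        exact hn
    have hsetsmeas : ∀ i, i ∈ Finset.range N → MeasurableSet (sets i) := by
      intro i _
      rw [hsets]
      dsimp only
      split
      · exact measurableSet_singleton _
      · exact MeasurableSet.univ
    rw [hrw, ProbabilityTheory.iIndepFun.measure_inter_preimage_eq_mul hind
      (Finset.range N) hsetsmeas]
    have hone : ∀ i ∈ Finset.range N, P (r i ⁻¹' sets i) = 1/2 := by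
      intro i hi
      have hiN : i < N := Finset.mem_range.1 hi
      rw [hsets]
      simp only [dif_pos hiN]
      apply hval'
      cases σ ⟨i, hiN⟩ <;> simp [eps]
    rw [Finset.prod_congr rfl hone, Finset.prod_const, Finset.card_range]
  -- the bad (null) set
  set bad : Set Ω := ⋃ n : Fin N, {ω | r n.val ω ≠ 1 ∧ r n.val ω ≠ -1} with hbaddef
  have hbadnull : P bad = 0 := by
    rw [hbaddef, measure_iUnion_null_iff]
    intro n
    have hmeq : {ω | r n.val ω ≠ 1 ∧ r n.val ω ≠ -1}
        = ({ω | r n.val ω = 1} ∪ {ω | r n.val ω = -1})ᶜ := by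
      ext ω; simp [Set.mem_union, Set.mem_compl_iff]
    rw [hmeq]
    have hm1 : MeasurableSet {ω | r n.val ω = 1} := by
      have : {ω | r n.val ω = 1} = r n.val ⁻¹' {1} := by ext ω; simp
      rw [this]; exact (hmeas n.val) (measurableSet_singleton _)
    have hm2 : MeasurableSet {ω | r n.val ω = -1} := by
      have : {ω | r n.val ω = -1} = r n.val ⁻¹' {-1} := by ext ω; simp
      rw [this]; exact (hmeas n.val) (measurableSet_singleton _)
    rw [prob_compl_eq_zero_iff (hm1.union hm2)]
    have hdisj : Disjoint {ω | r n.val ω = 1} {ω | r n.val ω = -1} := by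
      rw [Set.disjoint_left]
      intro ω h1 h2
      simp only [Set.mem_setOf_eq] at h1 h2
      rw [h1] at h2; norm_num at h2
    rw [measure_union hdisj hm2, (hval n.val).1, (hval n.val).2]
    rw [ENNReal.add_halves]
  -- a.e. pointwise identification
  have hae : (fun ω => ‖∑ n : Fin N, r n.val ω • a n‖ ^ e)
      =ᵐ[P] (fun ω => ∑ σ : Fin N → Bool, (A σ).indicator (fun _ => ‖sg a σ‖ ^ e) ω) := by
    apply Filter.eventuallyEq_of_mem (compl_mem_ae_iff.2 hbadnull)
    intro ω hω
    simp only [Set.mem_compl_iff, hbaddef, Set.mem_iUnion, not_exists, Set.mem_setOf_eq,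
      not_and_or, not_not] at hω
    set σ0 : Fin N → Bool := fun n => if r n.val ω = 1 then true else false with hσ0
    have hvals : ∀ n : Fin N, r n.val ω = eps (σ0 n) := by
      intro n
      by_cases h1 : r n.val ω = 1
      · rw [hσ0]; simp [h1, eps]
      · have h2 : r n.val ω = -1 := by
          rcases hω n with h | h
          · exact absurd h h1
          · exact h
        rw [hσ0]
        simp [h1, eps, h2]
    have hmem : ω ∈ A σ0 := hvals
    have huniq : ∀ σ, ω ∈ A σ → σ = σ0 := by
      intro σ hσ
      funext n
      apply eps_inj
      rw [← hσ n, hvals n]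
    have hRHS : ∑ σ : Fin N → Bool, (A σ).indicator (fun _ => ‖sg a σ‖ ^ e) ω
        = ‖sg a σ0‖ ^ e := by
      rw [Finset.sum_eq_single σ0]
      · rw [Set.indicator_of_mem hmem]
      · intro σ _ hne
        rw [Set.indicator_of_notMem]
        intro hcon
        exact hne (huniq σ hcon)
      · intro hcon
        exact absurd (Finset.mem_univ σ0) hcon
    have hLHS : ∑ n : Fin N, r n.val ω • a n = sg a σ0 := by
      unfold sg
      apply Finset.sum_congr rfl
      intro n _
      rw [hvals n]
    simp only []
    rw [hLHS, hRHS]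
  rw [integral_congr_ae hae, integral_finset_sum]
  · have hterm : ∀ σ : Fin N → Bool,
        ∫ ω, (A σ).indicator (fun _ => ‖sg a σ‖ ^ e) ω ∂P = (1/2:ℝ)^N * ‖sg a σ‖ ^ e := by
      intro σ
      rw [integral_indicator_const _ (hAmeas σ), measureReal_def, hPA σ, smul_eq_mul]
      congr 1
      rw [ENNReal.toReal_pow]
      congr 1
      simp [ENNReal.toReal_div]
    rw [Finset.sum_congr rfl (fun σ _ => hterm σ), ← Finset.mul_sum]
  · intro σ _
    exact (integrable_const _).indicator (hAmeas σ)

end conv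
end KK

open MeasureTheory

/-- **Khintchine–Kahane inequality.** For `0 < p < q < ∞` there is a constant `K_{p,q}` such
that for every Banach space `B`, all `a₁, …, a_N ∈ B` and every Rademacher sequence `(r_n)`:
`(E‖∑ a_n r_n‖^q)^{1/q} ≤ K_{p,q} (E‖∑ a_n r_n‖^p)^{1/p}`. -/
theorem khintchine_kahane (p q : ℝ) (hp : 0 < p) (hpq : p < q) :
    ∃ K : ℝ, 0 < K ∧
      ∀ (B : Type*) [NormedAddCommGroup B] [NormedSpace ℝ B] [CompleteSpace B]
        (N : ℕ) (a : Fin N → B)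
        (Ω : Type*) [MeasurableSpace Ω] (P : Measure Ω) [IsProbabilityMeasure P]
        (r : ℕ → Ω → ℝ), IsRademacher P r →
        (∫ ω, ‖∑ n : Fin N, r n.val ω • a n‖ ^ q ∂P) ^ (1/q)
          ≤ K * (∫ ω, ‖∑ n : Fin N, r n.val ω • a n‖ ^ p ∂P) ^ (1/p) := by
  obtain ⟨K, hK, hdisc⟩ := KK.discrete p q hp hpq
  refine ⟨K, hK, ?_⟩
  intro B _ _ _ N a Ω _ P _ r hr
  obtain ⟨hmeas, hind, hval⟩ := hr
  rw [KK.integral_eq_avg N a P r hmeas hind hval q,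
    KK.integral_eq_avg N a P r hmeas hind hval p]
  exact hdisc a
end

section
/- For j = 1, …, n, let K_j be a nonempty compact topological space and let f_j : K_j → ℂ be continuous, and suppose that 0 lies in the convex hull of the image f_j(K_j) for each j. Define f : ∏_{j=1}^n K_j → ℂ by f(x) = Σ_{j=1}^n f_j(x_j). Then π·‖f‖_∞ ≥ Σ_{j=1}^n ‖f_j‖_∞, where ‖·‖_∞ denotes the supremum norm. -/
open Real Complex intervalIntegral

lemma int_posPart_cos (φ : ℝ) :
    ∫ θ in (0:ℝ)..(2*π), max (Real.cos (θ + φ)) 0 = 2 := by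
  have hper : Function.Periodic (fun x => max (Real.cos x) 0) (2 * π) := fun x => by
    simp [Real.cos_periodic x]
  have h1 : ∫ θ in (0:ℝ)..(2*π), max (Real.cos (θ + φ)) 0
      = ∫ θ in φ..(φ + 2*π), max (Real.cos θ) 0 := by
    rw [intervalIntegral.integral_comp_add_right (fun θ => max (Real.cos θ) 0) φ]
    norm_num [add_comm]
  have h2 : ∫ θ in φ..(φ + 2*π), max (Real.cos θ) 0
      = ∫ θ in (-(π/2))..(-(π/2) + 2*π), max (Real.cos θ) 0 :=
    hper.intervalIntegral_add_eq φ (-(π/2))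
  have h3 : ∫ θ in (-(π/2))..(-(π/2) + 2*π), max (Real.cos θ) 0
      = (∫ θ in (-(π/2))..(π/2), max (Real.cos θ) 0)
        + ∫ θ in (π/2)..(-(π/2) + 2*π), max (Real.cos θ) 0 := by
    rw [intervalIntegral.integral_add_adjacent_intervals] <;>
      exact (Continuous.max Real.continuous_cos continuous_const).intervalIntegrable _ _
  have h4 : ∫ θ in (-(π/2))..(π/2), max (Real.cos θ) 0 = 2 := by
    rw [intervalIntegral.integral_congr (g := Real.cos) ?_]
    · norm_num [Real.sin_pi_div_two]
    · intro x hx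
      rw [Set.uIcc_of_le (by linarith [Real.pi_pos])] at hx
      exact max_eq_left (Real.cos_nonneg_of_mem_Icc hx)
  have h5 : ∫ θ in (π/2)..(-(π/2) + 2*π), max (Real.cos θ) 0 = 0 := by
    rw [intervalIntegral.integral_congr (g := fun _ => (0:ℝ)) ?_]
    · simp
    · intro x hx
      rw [Set.uIcc_of_le (by linarith [Real.pi_pos])] at hx
      have : Real.cos x ≤ 0 := by
        apply Real.cos_nonpos_of_pi_div_two_le_of_le hx.1
        linarith [hx.2]
      simp [max_eq_right this]
  rw [h1, h2, h3, h4, h5]; norm_num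

lemma exists_re_nonneg (c : ℂ) {S : Set ℂ} (hS : (0:ℂ) ∈ convexHull ℝ S) :
    ∃ z ∈ S, 0 ≤ (c * z).re := by
  by_contra h
  push_neg at h
  set L : ℂ →ₗ[ℝ] ℝ := Complex.reLm.comp ((LinearMap.mulLeft ℂ c).restrictScalars ℝ) with hL
  have hconv : Convex ℝ {z : ℂ | (c * z).re < 0} := by
    have := (convex_Iio (0:ℝ)).linear_preimage L
    exact this
  have hsub : S ⊆ {z : ℂ | (c * z).re < 0} := fun z hz => h z hz
  have := convexHull_min hsub hconv hS
  simp at this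

/-- **Ullrich's lemma.** If `K₁, …, K_n` are nonempty compact spaces, `f_j : K_j → ℂ` are
continuous with `0` in the convex hull of the image of `f_j`, and
`f(x) = ∑_j f_j(x_j)` on `∏_j K_j`, then `π ‖f‖_∞ ≥ ∑_j ‖f_j‖_∞`. -/
theorem ullrich_lemma (n : ℕ) (K : Fin n → Type*)
    [∀ j, TopologicalSpace (K j)] [∀ j, CompactSpace (K j)] [∀ j, Nonempty (K j)]
    (f : ∀ j, C(K j, ℂ))
    (h0 : ∀ j, (0 : ℂ) ∈ convexHull ℝ (Set.range (f j)))
    (F : C((∀ j, K j), ℂ)) (hF : ∀ x, F x = ∑ j, f j (x j)) :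
    ∑ j, ‖f j‖ ≤ Real.pi * ‖F‖ := by
  have hmax : ∀ j, ∃ x : K j, ∀ y : K j, ‖f j y‖ ≤ ‖f j x‖ := by
    intro j
    obtain ⟨x, -, hx⟩ := isCompact_univ.exists_isMaxOn Set.univ_nonempty
      ((map_continuous (f j)).norm.continuousOn)
    exact ⟨x, fun y => hx (Set.mem_univ y)⟩
  choose xs hxs using hmax
  set r : Fin n → ℝ := fun j => ‖f j‖ with hr
  have hrx : ∀ j, ‖f j (xs j)‖ = r j := by
    intro j
    refine le_antisymm ((f j).norm_coe_le_norm (xs j)) ?_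
    exact ((f j).norm_le (norm_nonneg _)).2 (hxs j)
  set φ : Fin n → ℝ := fun j => (f j (xs j)).arg with hφ
  have key : ∀ θ : ℝ, (∑ j, r j * max (Real.cos (θ + φ j)) 0) ≤ ‖F‖ := by
    intro θ
    set c : ℂ := Complex.exp (θ * Complex.I) with hc
    have hre : ∀ j, (c * f j (xs j)).re = r j * Real.cos (θ + φ j) := by
      intro j
      have h1 : f j (xs j) = (r j : ℂ) * Complex.exp (φ j * Complex.I) := by
        rw [← hrx j]
        exact (Complex.norm_mul_exp_arg_mul_I _).symm
      rw [h1, hc, mul_left_comm, ← Complex.exp_add, ← add_mul, ← Complex.ofReal_add,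
        Complex.re_ofReal_mul, Complex.exp_ofReal_mul_I_re]
    have hy : ∀ j, ∃ y : K j, max ((c * f j (xs j)).re) 0 ≤ (c * f j y).re := by
      intro j
      rcases le_or_gt 0 ((c * f j (xs j)).re) with h | h
      · exact ⟨xs j, max_le le_rfl h⟩
      · obtain ⟨z, ⟨w, hw⟩, hz⟩ := exists_re_nonneg c (h0 j)
        exact ⟨w, max_le (by rw [hw]; exact h.le.trans hz) (by rw [hw]; exact hz)⟩
    choose y hy using hy
    have habs : ‖c‖ = 1 := Complex.norm_exp_ofReal_mul_I θ
    calc ∑ j, r j * max (Real.cos (θ + φ j)) 0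
        = ∑ j, max ((c * f j (xs j)).re) 0 := by
          refine Finset.sum_congr rfl fun j _ => ?_
          rw [hre j, mul_max_of_nonneg _ _ (show (0:ℝ) ≤ r j by rw [hr]; exact norm_nonneg _), mul_zero]
      _ ≤ ∑ j, (c * f j (y j)).re := Finset.sum_le_sum fun j _ => hy j
      _ = (c * F y).re := by
          rw [hF y, Finset.mul_sum, Complex.re_sum]
      _ ≤ ‖c * F y‖ := Complex.re_le_norm _
      _ = ‖F y‖ := by rw [norm_mul, habs, one_mul]
      _ ≤ ‖F‖ := F.norm_coe_le_norm y
  have hint : ∀ j : Fin n, IntervalIntegrable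
      (fun θ => r j * max (Real.cos (θ + φ j)) 0) MeasureTheory.volume 0 (2*Real.pi) := by
    intro j
    exact (continuous_const.mul ((Real.continuous_cos.comp (continuous_id.add
      continuous_const)).max continuous_const)).intervalIntegrable _ _
  have hintsum : IntervalIntegrable
      (fun θ => ∑ j, r j * max (Real.cos (θ + φ j)) 0) MeasureTheory.volume 0 (2*Real.pi) := by
    exact (continuous_finset_sum _ fun j _ => continuous_const.mul
      ((Real.continuous_cos.comp (continuous_id.add continuous_const)).max
        continuous_const)).intervalIntegrable _ _
  have hmono := intervalIntegral.integral_mono_on (by positivity : (0:ℝ) ≤ 2*Real.pi)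
    hintsum (intervalIntegrable_const) (fun θ _ => key θ)
  rw [intervalIntegral.integral_const, intervalIntegral.integral_finset_sum
    (fun j _ => hint j)] at hmono
  have hsum : ∀ j ∈ Finset.univ, (∫ θ in (0:ℝ)..(2*Real.pi),
      r j * max (Real.cos (θ + φ j)) 0) = 2 * r j := by
    intro j _
    rw [intervalIntegral.integral_const_mul, int_posPart_cos]
    ring
  rw [Finset.sum_congr rfl hsum, ← Finset.mul_sum, smul_eq_mul, sub_zero] at hmono
  have hπ := Real.pi_pos
  nlinarith [hmono]
end

section
/- The constant π in the following inequality is best possible: for every real number c < π there exist a positive integer n, nonempty compact topological spaces K_1, …, K_n, and continuous functions f_j : K_j → ℂ with 0 in the convex hull of f_j(K_j) for each j, such that, with f : ∏_{j=1}^n K_j → ℂ defined by f(x) = Σ_{j=1}^n f_j(x_j), one has c·‖f‖_∞ < Σ_{j=1}^n ‖f_j‖_∞. -/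
open Real Finset

universe u

noncomputable def cpos (t : ℝ) : ℝ := max (Real.cos t) 0

lemma cpos_nonneg (t : ℝ) : 0 ≤ cpos t := le_max_right _ _

lemma cpos_cont : Continuous cpos := Real.continuous_cos.max continuous_const

lemma cpos_lip (a b : ℝ) : cpos a ≤ cpos b + |a - b| := by
  have h1 : |Real.cos a - Real.cos b| ≤ |a - b| := by
    rw [Real.cos_sub_cos]
    have h2 := Real.abs_sin_le_one ((a + b) / 2)
    have h3 := Real.abs_sin_le_abs (x := (a - b) / 2)
    rw [abs_mul, abs_mul, show |(-2 : ℝ)| = 2 by norm_num]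
    have h4 : |(a - b) / 2| = |a - b| / 2 := by
      rw [abs_div]; norm_num
    nlinarith [abs_nonneg (Real.sin ((a - b) / 2)), abs_nonneg (a - b),
      abs_nonneg (Real.sin ((a + b) / 2))]
  have h2 := abs_max_sub_max_le_abs (Real.cos a) (Real.cos b) 0
  have h3 : cpos a - cpos b ≤ |cpos a - cpos b| := le_abs_self _
  simp only [cpos]
  have : |Real.cos a ⊔ 0 - Real.cos b ⊔ 0| ≤ |a - b| := le_trans h2 h1
  have := le_trans (le_abs_self _) this
  linarith

lemma cpos_integral (a : ℝ) : ∫ t in a..(a + 2 * π), cpos t = 2 := by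
  have hper : Function.Periodic cpos (2 * π) := fun x => by
    simp [cpos, Real.cos_add_two_pi]
  rw [hper.intervalIntegral_add_eq a (-(π / 2))]
  have h1 : -(π / 2) + 2 * π = 3 * π / 2 := by ring
  rw [h1]
  rw [← intervalIntegral.integral_add_adjacent_intervals (b := π / 2)
    (cpos_cont.intervalIntegrable _ _) (cpos_cont.intervalIntegrable _ _)]
  have e1 : ∫ t in (-(π / 2))..(π / 2), cpos t = ∫ t in (-(π / 2))..(π / 2), Real.cos t := by
    apply intervalIntegral.integral_congr
    intro x hx
    rw [Set.uIcc_of_le (by linarith [Real.pi_pos])] at hx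
    exact max_eq_left (Real.cos_nonneg_of_mem_Icc ⟨hx.1, hx.2⟩)
  have e2 : ∫ t in (π / 2)..(3 * π / 2), cpos t = 0 := by
    rw [show (0 : ℝ) = ∫ _t in (π / 2)..(3 * π / 2), (0 : ℝ) by simp]
    apply intervalIntegral.integral_congr
    intro x hx
    rw [Set.uIcc_of_le (by linarith [Real.pi_pos])] at hx
    exact max_eq_right (Real.cos_nonpos_of_pi_div_two_le_of_le hx.1 (by linarith [hx.2]))
  rw [e1, e2, integral_cos]
  norm_num

lemma cpos_riemann (n : ℕ) (hn : 0 < n) (a : ℝ) :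
    ∑ j ∈ range n, cpos (a + j * (2 * π / n)) ≤ n / π + 2 * π := by
  have hπ := Real.pi_pos
  have hn' : (0 : ℝ) < n := by exact_mod_cast hn
  set h := 2 * π / n with hh
  have hh0 : 0 < h := by positivity
  have key : ∀ j : ℕ, cpos (a + j * h) * h ≤ (∫ t in (a + j * h)..(a + (j + 1) * h), cpos t) + h ^ 2 := by
    intro j
    have h1 : (a + j * h) ≤ (a + (j + 1) * h) := by nlinarith
    have h2 : ∀ x ∈ Set.Icc (a + j * h) (a + (j + 1) * h), cpos (a + j * h) ≤ cpos x + h := by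
      intro x hx
      have hb : |a + j * h - x| ≤ h := by
        rw [abs_le]
        constructor <;> nlinarith [hx.1, hx.2]
      calc cpos (a + j * h) ≤ cpos x + |a + j * h - x| := cpos_lip _ _
        _ ≤ cpos x + h := by linarith
    have hmono := intervalIntegral.integral_mono_on (μ := MeasureTheory.volume) h1
      (g := fun x => cpos x + h) (intervalIntegrable_const)
      ((cpos_cont.add continuous_const).intervalIntegrable _ _) h2
    rw [intervalIntegral.integral_const,
      intervalIntegral.integral_add (cpos_cont.intervalIntegrable _ _) intervalIntegrable_const,
      intervalIntegral.integral_const] at hmono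
    have e : (a + (j + 1) * h) - (a + j * h) = h := by ring
    rw [e] at hmono
    simp only [smul_eq_mul] at hmono
    nlinarith [hmono]
  have tele : ∑ j ∈ range n, ∫ t in (a + j * h)..(a + (j + 1) * h), cpos t
      = ∫ t in a..(a + n * h), cpos t := by
    have := intervalIntegral.sum_integral_adjacent_intervals
      (a := fun k : ℕ => a + k * h) (n := n) (f := cpos) (μ := MeasureTheory.volume)
      (fun k _ => cpos_cont.intervalIntegrable _ _)
    push_cast at this
    simpa using this
  have hnh : a + n * h = a + 2 * π := by
    rw [hh, mul_div_assoc', mul_div_cancel_left₀ _ hn'.ne']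
  have hint : ∫ t in a..(a + n * h), cpos t = 2 := by rw [hnh]; exact cpos_integral a
  have hsum : (∑ j ∈ range n, cpos (a + j * h)) * h ≤ 2 + n * h ^ 2 := by
    rw [Finset.sum_mul]
    calc ∑ j ∈ range n, cpos (a + j * h) * h
        ≤ ∑ j ∈ range n, ((∫ t in (a + j * h)..(a + (j + 1) * h), cpos t) + h ^ 2) :=
          Finset.sum_le_sum fun j _ => key j
      _ = (∑ j ∈ range n, ∫ t in (a + j * h)..(a + (j + 1) * h), cpos t) + n * h ^ 2 := by
          rw [Finset.sum_add_distrib, Finset.sum_const, Finset.card_range, nsmul_eq_mul]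
      _ = 2 + n * h ^ 2 := by rw [tele, hint]
  have hfin : (∑ j ∈ range n, cpos (a + j * h)) ≤ (2 + n * h ^ 2) / h := by
    rw [le_div_iff₀ hh0]; exact hsum
  calc (∑ j ∈ range n, cpos (a + j * h)) ≤ (2 + n * h ^ 2) / h := hfin
    _ = n / π + 2 * π := by
        rw [hh]; field_simp

lemma sum_root_bound (n : ℕ) (hn : 0 < n) (S : Finset (Fin n)) :
    ‖∑ j ∈ S, Complex.exp ((2 * π * j / n : ℝ) * Complex.I)‖ ≤ n / π + 2 * π := by
  have hπ := Real.pi_pos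
  have hn' : (0 : ℝ) < n := by exact_mod_cast hn
  set z := ∑ j ∈ S, Complex.exp ((2 * π * j / n : ℝ) * Complex.I) with hz
  set φ := z.arg with hφ
  have key : (‖z‖ : ℝ) = ∑ j ∈ S, Real.cos (2 * π * j / n - φ) := by
    have e0 : (‖z‖ : ℂ) = z * Complex.exp (-(φ : ℝ) * Complex.I) := by
      conv_rhs => rw [← Complex.norm_mul_exp_arg_mul_I z]
      rw [mul_assoc, ← Complex.exp_add]
      norm_num [hφ]
    have e1 : z * Complex.exp (-(φ : ℝ) * Complex.I)
        = ∑ j ∈ S, Complex.exp (((2 * π * j / n - φ : ℝ)) * Complex.I) := by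
      rw [hz, Finset.sum_mul]
      apply Finset.sum_congr rfl
      intro j _
      rw [← Complex.exp_add]
      congr 1
      push_cast
      ring
    have := congrArg Complex.re e0
    rw [e1] at this
    simp only [Complex.ofReal_re] at this
    rw [this, Complex.re_sum]
    apply Finset.sum_congr rfl
    intro j _
    exact Complex.exp_ofReal_mul_I_re _
  rw [key]
  calc ∑ j ∈ S, Real.cos (2 * π * j / n - φ)
      ≤ ∑ j ∈ S, cpos (2 * π * j / n - φ) := Finset.sum_le_sum fun j _ => le_max_left _ _
    _ ≤ ∑ j : Fin n, cpos (2 * π * j / n - φ) :=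
        Finset.sum_le_sum_of_subset_of_nonneg (Finset.subset_univ S) fun j _ _ => cpos_nonneg _
    _ = ∑ j ∈ range n, cpos (-φ + j * (2 * π / n)) := by
        rw [Fin.sum_univ_eq_sum_range (fun k : ℕ => cpos (2 * π * k / n - φ)) n]
        apply Finset.sum_congr rfl
        intro j _
        congr 1
        ring
    _ ≤ n / π + 2 * π := cpos_riemann n hn (-φ)

noncomputable def myg (n : ℕ) (δ : ℝ) (j : Fin n) : ULift.{u} Bool → ℂ := fun b =>
  if b.down then Complex.exp ((2 * π * j / n : ℝ) * Complex.I)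
  else -(δ : ℂ) * Complex.exp ((2 * π * j / n : ℝ) * Complex.I)

noncomputable def myf (n : ℕ) (δ : ℝ) (j : Fin n) : C(TopCat.of (ULift.{u} Bool), ℂ) :=
  ⟨fun b => myg n δ j b, continuous_of_discreteTopology (α := ULift Bool)⟩

lemma roots_sum_zero (n : ℕ) (hn : 2 ≤ n) :
    ∑ j : Fin n, Complex.exp ((2 * π * j / n : ℝ) * Complex.I) = 0 := by
  have hπ := Real.pi_pos
  have hn' : (0 : ℝ) < n := by positivity
  set ω := Complex.exp ((2 * π / n : ℝ) * Complex.I) with hω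
  have hpow : ∀ j : ℕ, Complex.exp ((2 * π * j / n : ℝ) * Complex.I) = ω ^ j := by
    intro j
    rw [hω, ← Complex.exp_nat_mul]
    congr 1
    push_cast
    ring
  have hωn : ω ^ n = 1 := by
    rw [← hpow n]
    have : ((2 * π * n / n : ℝ) : ℂ) * Complex.I = 2 * (π : ℂ) * Complex.I := by
      push_cast
      rw [mul_div_assoc, div_self (by exact_mod_cast hn'.ne')]
      ring
    rw [this, Complex.exp_two_pi_mul_I]
  have hω1 : ω ≠ 1 := by
    intro h
    rw [hω, Complex.exp_eq_one_iff] at h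
    obtain ⟨k, hk⟩ := h
    have h' : ((2 * π / n : ℝ) : ℂ) * Complex.I = ((k : ℂ) * (2 * π)) * Complex.I := by
      rw [hk]; ring
    have hI := mul_right_cancel₀ Complex.I_ne_zero h'
    have hre : (2 * π / n : ℝ) = k * (2 * π) := by
      have := congrArg Complex.re hI
      simpa using this
    have h1 : (0 : ℝ) < 2 * π / n := by positivity
    have h2n : (2 : ℝ) ≤ n := by exact_mod_cast hn
    have h2 : 2 * π / n ≤ π := by
      rw [div_le_iff₀ hn']
      nlinarith [mul_nonneg hπ.le (sub_nonneg.mpr h2n)]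
    have hk1 : (1 : ℤ) ≤ k := by
      by_contra hk0
      push_neg at hk0
      have : (k : ℝ) ≤ 0 := by exact_mod_cast Int.lt_add_one_iff.mp (by omega : k < 0 + 1)
      nlinarith
    have : (1 : ℝ) ≤ k := by exact_mod_cast hk1
    nlinarith
  rw [Fin.sum_univ_eq_sum_range (fun j : ℕ => Complex.exp ((2 * π * j / n : ℝ) * Complex.I)) n]
  calc ∑ j ∈ range n, Complex.exp ((2 * π * j / n : ℝ) * Complex.I)
      = ∑ j ∈ range n, ω ^ j := Finset.sum_congr rfl fun j _ => hpow j
    _ = (ω ^ n - 1) / (ω - 1) := geom_sum_eq hω1 n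
    _ = 0 := by rw [hωn]; simp

lemma F_decomp (n : ℕ) (hn : 2 ≤ n) (δ : ℝ) (x : Fin n → ULift.{u} Bool) :
    ∑ j : Fin n, myg n δ j (x j)
      = ((1 + δ : ℝ) : ℂ) * ∑ j ∈ Finset.univ.filter (fun j => (x j).down = true),
          Complex.exp ((2 * π * j / n : ℝ) * Complex.I) := by
  have e : ∀ j : Fin n, myg n δ j (x j)
      = -(δ : ℂ) * Complex.exp ((2 * π * j / n : ℝ) * Complex.I)
        + (if (x j).down = true then
             ((1 + δ : ℝ) : ℂ) * Complex.exp ((2 * π * j / n : ℝ) * Complex.I)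
           else 0) := by
    intro j
    cases hxj : (x j).down <;> simp [myg, hxj] <;> push_cast <;> ring
  rw [Finset.sum_congr rfl fun j _ => e j, Finset.sum_add_distrib, ← Finset.mul_sum,
    roots_sum_zero n hn, mul_zero, zero_add, Finset.mul_sum, Finset.sum_filter]

lemma myf_sup (n : ℕ) (hn : 0 < n) (δ : ℝ) (hδ0 : 0 ≤ δ) (hδ1 : δ ≤ 1) (j : Fin n) :
    (⨆ y : TopCat.of (ULift.{u} Bool), ‖myf n δ j y‖) = 1 := by
  have habs : ‖Complex.exp ((2 * π * j / n : ℝ) * Complex.I)‖ = 1 :=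
    Complex.norm_exp_ofReal_mul_I _
  have hval : ∀ b : ULift.{u} Bool, ‖myg n δ j b‖ ≤ 1 := by
    rintro ⟨b⟩
    cases b
    · show ‖-(δ : ℂ) * Complex.exp ((2 * π * j / n : ℝ) * Complex.I)‖ ≤ 1
      rw [neg_mul, norm_neg, norm_mul, Complex.norm_real, Real.norm_eq_abs, abs_of_nonneg hδ0, habs,
        mul_one]
      linarith
    · show ‖Complex.exp ((2 * π * j / n : ℝ) * Complex.I)‖ ≤ 1
      rw [habs]
  apply le_antisymm
  · exact Real.iSup_le (fun b => hval b) zero_le_one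
  · have hfin : Finite (TopCat.of (ULift.{u} Bool)) := inferInstanceAs (Finite (ULift Bool))
    have hbdd : BddAbove
        (Set.range fun y : TopCat.of (ULift.{u} Bool) => ‖myf n δ j y‖) :=
      (Set.finite_range _).bddAbove
    have h := le_ciSup hbdd (ULift.up true)
    calc (1 : ℝ) = ‖myf n δ j (ULift.up true)‖ := by
          show (1 : ℝ) = ‖Complex.exp ((2 * π * j / n : ℝ) * Complex.I)‖
          rw [habs]
      _ ≤ _ := h

/-- **Sharpness of the constant `π` in Ullrich's lemma.** For every `c < π` there are a
positive integer `n`, nonempty compact spaces `K₁, …, K_n`, and continuous `f_j : K_j → ℂ`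
with `0` in the convex hull of the image of each `f_j`, such that with
`F(x) = ∑_j f_j(x_j)` on `∏_j K_j` one has `c ‖F‖_∞ < ∑_j ‖f_j‖_∞`.  (Here the sup norms are
written as suprema of `|·|`.) -/
theorem ullrich_constant_sharp (c : ℝ) (hc : c < Real.pi) :
    ∃ (n : ℕ) (K : Fin n → TopCat) (f : ∀ j, C(K j, ℂ)) (F : C((∀ j, K j), ℂ)),
      0 < n ∧
      (∀ j, CompactSpace (K j)) ∧ (∀ j, Nonempty (K j)) ∧
      (∀ j, (0 : ℂ) ∈ convexHull ℝ (Set.range (f j))) ∧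
      (∀ x, F x = ∑ j, f j (x j)) ∧
      c * (⨆ x, ‖F x‖) < ∑ j, ⨆ y, ‖f j y‖ := by
  have hπ := Real.pi_pos
  set c' := max c 1 with hc'def
  have hc'1 : (1 : ℝ) ≤ c' := le_max_right _ _
  have hc'pi : c' < π := max_lt hc (by linarith [Real.pi_gt_three])
  set δ := (π - c') / (2 * π) with hδdef
  have hδ0 : 0 < δ := div_pos (by linarith) (by linarith)
  have hδ1 : δ ≤ 1 := by
    rw [div_le_one (by linarith)]
    nlinarith
  set B := (π + c') / 2 with hBdef
  have hBpos : 0 < B := by rw [hBdef]; linarith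
  have hπδ : π * δ = (π - c') / 2 := by
    rw [hδdef]; field_simp
  have hcB : c' * (1 + δ) ≤ B := by
    have h1 : c' * δ ≤ π * δ := mul_le_mul_of_nonneg_right hc'pi.le hδ0.le
    nlinarith
  have hBπ : B < π := by rw [hBdef]; linarith
  obtain ⟨n, hn⟩ := exists_nat_gt (max (2 * π * B * π / (π - B)) 2)
  have hn2 : 2 ≤ n := by
    have h2 : (2 : ℝ) < n := lt_of_le_of_lt (le_max_right _ _) hn
    exact_mod_cast h2.le
  have hnt : 2 * π * B * π / (π - B) < n := lt_of_le_of_lt (le_max_left _ _) hn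
  have hn0 : 0 < n := by omega
  have hn' : (0 : ℝ) < n := by exact_mod_cast hn0
  have hmain : B * ((n : ℝ) / π + 2 * π) < n := by
    rw [div_lt_iff₀ (by linarith : (0 : ℝ) < π - B)] at hnt
    rw [← sub_pos]
    have e : (n : ℝ) - B * ((n : ℝ) / π + 2 * π)
        = ((n : ℝ) * (π - B) - 2 * π * B * π) / π := by
      field_simp; ring
    rw [e]
    apply div_pos _ hπ
    linarith
  refine ⟨n, fun _ => TopCat.of (ULift Bool), fun j => myf n δ j,
    ⟨fun x => ∑ j, myf n δ j (x j),
      continuous_finset_sum _ fun j _ => ((myf n δ j).continuous.comp (continuous_apply j))⟩,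
    hn0, fun _ => inferInstanceAs (CompactSpace (ULift Bool)),
    fun _ => inferInstanceAs (Nonempty (ULift Bool)),
    ?_, fun x => rfl, ?_⟩
  · intro j
    have hseg : (0 : ℂ) ∈ segment ℝ (myf n δ j (ULift.up true)) (myf n δ j (ULift.up false)) := by
      refine ⟨δ / (1 + δ), 1 / (1 + δ), div_nonneg hδ0.le (by linarith),
        by positivity, by
          rw [← add_div, add_comm, div_self (by linarith : (1 + δ : ℝ) ≠ 0)], ?_⟩
      show (δ / (1 + δ)) • (myg n δ j (ULift.up.{u_1} true))
        + (1 / (1 + δ)) • (myg n δ j (ULift.up.{u_1} false)) = 0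
      simp only [myg, if_true, if_false]
      rw [Complex.real_smul, Complex.real_smul]
      have h1δ : (1 + δ : ℂ) ≠ 0 := by
        exact_mod_cast Complex.ofReal_ne_zero.mpr (by linarith : (1 + δ : ℝ) ≠ 0)
      push_cast
      field_simp
      ring
    exact segment_subset_convexHull (Set.mem_range_self _) (Set.mem_range_self _) hseg
  · have hsupF : (⨆ x : ∀ _ : Fin n, TopCat.of (ULift Bool), ‖∑ j, myf n δ j (x j)‖)
        ≤ (1 + δ) * ((n : ℝ) / π + 2 * π) := by
      apply Real.iSup_le _ (by positivity)
      intro x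
      have hd : (∑ j, myf n δ j (x j)) = ∑ j : Fin n, myg n δ j (x j) := rfl
      rw [hd, F_decomp n hn2 δ (fun j => x j), norm_mul, Complex.norm_real, Real.norm_eq_abs,
        abs_of_pos (by linarith)]
      exact mul_le_mul_of_nonneg_left (sum_root_bound n hn0 _) (by linarith)
    have hsum1 : ∑ j : Fin n, (⨆ y : TopCat.of (ULift Bool), ‖myf n δ j y‖) = n := by
      rw [Finset.sum_congr rfl fun j _ => myf_sup n hn0 δ hδ0.le hδ1 j]
      simp
    rw [ContinuousMap.coe_mk]
    rw [hsum1]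
    have hsup0 : 0 ≤ ⨆ x : ∀ _ : Fin n, TopCat.of (ULift Bool), ‖∑ j, myf n δ j (x j)‖ :=
      Real.iSup_nonneg fun x => norm_nonneg _
    calc c * (⨆ x : ∀ _ : Fin n, TopCat.of (ULift Bool), ‖∑ j, myf n δ j (x j)‖)
        ≤ c' * (⨆ x : ∀ _ : Fin n, TopCat.of (ULift Bool), ‖∑ j, myf n δ j (x j)‖) :=
          mul_le_mul_of_nonneg_right (le_max_left c 1) hsup0
      _ ≤ c' * ((1 + δ) * ((n : ℝ) / π + 2 * π)) :=
          mul_le_mul_of_nonneg_left hsupF (by linarith)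
      _ = (c' * (1 + δ)) * ((n : ℝ) / π + 2 * π) := by ring
      _ ≤ B * ((n : ℝ) / π + 2 * π) :=
          mul_le_mul_of_nonneg_right hcB (by positivity)
      _ < n := hmain
end
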